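/- arXiv:2412.15968 — 10 statements merged into one kernel-verified Lean document; each statement's English description precedes it below -/
import Mathlib

section
/- Let B be a C*-algebra and ρ a state on B. Then the state-kernel J_{B,ρ} is a well-defined, norm-closed, hereditary C*-subalgebra of the sequence algebra B_∞: it is closed under addition, scalar multiplication, multiplication and adjoints, it is closed in norm, and whenever x ∈ J_{B,ρ} and y ∈ B_∞ satisfy 0 ≤ y ≤ x, then y ∈ J_{B,ρ}. -/
/-!
STATEMENT 0: For a C*-algebra `B` and a state `ρ` on `B`, the state-kernel `J_{B,ρ}` is a
well-defined, norm-closed, hereditary C*-subalgebra of the sequence algebra `B_∞`.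

`B_∞` is encoded abstractly: a C*-algebra `Binf` together with a surjective *-homomorphism
`πB : ℓ∞(ℕ, B) → Binf` whose kernel is exactly the sequences tending to `0` in norm; this
characterizes `B_∞ = ℓ∞(ℕ, B)/c₀(ℕ, B)` up to isomorphism.  The canonical order on a
C*-algebra is encoded by the (uniquely determined) `StarOrderedRing` structure.
-/

open Filter Topology
open scoped ENNReal

noncomputable section

/-- The `ρ`-seminorm `‖b‖_ρ := √((ρ(b* b)).re)`. -/
def rhoNorm {B : Type*} [NonUnitalCStarAlgebra B] (ρ : B →L[ℂ] ℂ) (b : B) : ℝ :=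
  Real.sqrt (ρ (star b * b)).re

/-- The `(ρ,#)`-seminorm `‖b‖_{ρ,#} := (‖b‖_ρ + ‖b*‖_ρ)/2`. -/
def rhoSharp {B : Type*} [NonUnitalCStarAlgebra B] (ρ : B →L[ℂ] ℂ) (b : B) : ℝ :=
  (rhoNorm ρ b + rhoNorm ρ (star b)) / 2

/-- A state on a C*-algebra: a positive continuous linear functional of norm one. -/
def IsState {B : Type*} [NonUnitalCStarAlgebra B] (ρ : B →L[ℂ] ℂ) : Prop :=
  ‖ρ‖ = 1 ∧ ∀ b : B, 0 ≤ (ρ (star b * b)).re ∧ (ρ (star b * b)).im = 0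

/-!
`‖b‖_ρ` is the seminorm of the GNS pre-Hilbert space of `ρ`, so it is subadditive, bounded by
`‖b‖`, and satisfies `‖a b‖_ρ ≤ ‖a‖ ‖b‖_ρ`. Hence the sequences `x` with `‖x n‖_{ρ,#} → 0` form a
star subalgebra of `ℓ∞(ℕ, B)`, and `J_{B,ρ}` is its image in `B_∞`. Since `‖·‖_{ρ,#}` is
`1`-Lipschitz for the norm, membership does not depend on the representative, and closedness
follows once we know that a representative of `z` eventually has norm below any `r > ‖z‖`.
For heredity write `y = π(c* c)` and `x = π(a)` with `a = c* c + d* d`; then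
`‖c_n* c_n‖_ρ ≤ ‖c‖ ρ(c_n* c_n)^{1/2} ≤ ‖c‖ ρ(a_n)^{1/2} ≤ ‖c‖ ‖a_n‖_ρ^{1/2} → 0`, the last step
by `|ρ(a)| ≤ ‖a‖_ρ`.
-/

open scoped ComplexOrder

section RhoSharp

variable {B : Type*} [NonUnitalCStarAlgebra B]

lemma rhoSharp_nonneg (ρ : B →L[ℂ] ℂ) (b : B) : 0 ≤ rhoSharp ρ b := by
  unfold rhoSharp rhoNorm; positivity

lemma rhoSharp_star (ρ : B →L[ℂ] ℂ) (b : B) : rhoSharp ρ (star b) = rhoSharp ρ b := by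
  rw [rhoSharp, rhoSharp, star_star, add_comm]

lemma rhoSharp_eq_rhoNorm (ρ : B →L[ℂ] ℂ) {b : B} (hb : IsSelfAdjoint b) :
    rhoSharp ρ b = rhoNorm ρ b := by
  rw [rhoSharp, hb.star_eq, add_self_div_two]

lemma rhoNorm_le_two_mul_rhoSharp (ρ : B →L[ℂ] ℂ) (b : B) : rhoNorm ρ b ≤ 2 * rhoSharp ρ b := by
  have : 0 ≤ rhoNorm ρ (star b) := Real.sqrt_nonneg _
  rw [rhoSharp]; linarith

end RhoSharp

namespace IsState

variable {B : Type*} [NonUnitalCStarAlgebra B] {ρ : B →L[ℂ] ℂ}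

lemma norm_apply_le (hρ : IsState ρ) (b : B) : ‖ρ b‖ ≤ ‖b‖ := by
  simpa [hρ.1] using ρ.le_opNorm b

lemma rhoNorm_le_norm (hρ : IsState ρ) (b : B) : rhoNorm ρ b ≤ ‖b‖ :=
  calc rhoNorm ρ b ≤ √(‖b‖ * ‖b‖) := Real.sqrt_le_sqrt <| (Complex.re_le_norm _).trans <|
        (hρ.norm_apply_le _).trans_eq CStarRing.norm_star_mul_self
    _ = ‖b‖ := Real.sqrt_mul_self (norm_nonneg b)

lemma rhoSharp_le_norm (hρ : IsState ρ) (x : B) : rhoSharp ρ x ≤ ‖x‖ := by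
  have := hρ.rhoNorm_le_norm x
  have := hρ.rhoNorm_le_norm (star x)
  rw [norm_star] at this
  rw [rhoSharp]; linarith

variable [PartialOrder B] [StarOrderedRing B]

def toPositiveLinearMap (hρ : IsState ρ) : B →ₚ[ℂ] ℂ :=
  .mk₀ ρ.toLinearMap fun a ha => by
    obtain ⟨s, rfl⟩ := CStarAlgebra.nonneg_iff_eq_star_mul_self.mp ha
    exact Complex.nonneg_iff.mpr ⟨(hρ.2 s).1, (hρ.2 s).2.symm⟩

lemma rhoNorm_eq_norm_toPreGNS (hρ : IsState ρ) (b : B) :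
    rhoNorm ρ b = ‖hρ.toPositiveLinearMap.toPreGNS b‖ :=
  rfl

lemma rhoNorm_add_le (hρ : IsState ρ) (x y : B) :
    rhoNorm ρ (x + y) ≤ rhoNorm ρ x + rhoNorm ρ y := by
  simpa only [hρ.rhoNorm_eq_norm_toPreGNS, map_add] using norm_add_le _ _

lemma rhoNorm_smul (hρ : IsState ρ) (c : ℂ) (x : B) : rhoNorm ρ (c • x) = ‖c‖ * rhoNorm ρ x := by
  simpa only [hρ.rhoNorm_eq_norm_toPreGNS, map_smul] using norm_smul c _

lemma rhoNorm_mul_le (hρ : IsState ρ) (a b : B) : rhoNorm ρ (a * b) ≤ ‖a‖ * rhoNorm ρ b := by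
  set f := hρ.toPositiveLinearMap
  calc rhoNorm ρ (a * b) = ‖f.leftMulMapPreGNS a (f.toPreGNS b)‖ := rfl
    _ ≤ ‖f.leftMulMapPreGNS a‖ * ‖f.toPreGNS b‖ := (f.leftMulMapPreGNS a).le_opNorm _
    _ ≤ ‖a‖ * rhoNorm ρ b :=
      mul_le_mul_of_nonneg_right (LinearMap.mkContinuous_norm_le _ (norm_nonneg a) _)
        (norm_nonneg _)

/-- `|ρ(a)|² ≤ ρ(a* a)` without a unit: test `a` against an increasing approximate unit. -/
lemma norm_apply_le_rhoNorm (hρ : IsState ρ) (a : B) : ‖ρ a‖ ≤ rhoNorm ρ a := by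
  set f := hρ.toPositiveLinearMap
  have hunit := CStarAlgebra.increasingApproximateUnit B
  have hlim : Tendsto (fun e => ρ (e * a)) (CStarAlgebra.approximateUnit B) (𝓝 (ρ a)) :=
    (ρ.continuous.tendsto a).comp (hunit.tendsto_mul_right a)
  refine le_of_tendsto hlim.norm ?_
  filter_upwards [hunit.eventually_nonneg, hunit.eventually_norm] with e he₀ he₁
  calc ‖ρ (e * a)‖ = ‖ρ (star e * a)‖ := by rw [he₀.isSelfAdjoint.star_eq]
    _ = ‖inner ℂ (f.toPreGNS e) (f.toPreGNS a)‖ := rfl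
    _ ≤ rhoNorm ρ e * rhoNorm ρ a := norm_inner_le_norm _ _
    _ ≤ 1 * rhoNorm ρ a := by
        gcongr
        exacts [Real.sqrt_nonneg _, (hρ.rhoNorm_le_norm e).trans he₁]
    _ = rhoNorm ρ a := one_mul _

lemma rhoSharp_add_le (hρ : IsState ρ) (x y : B) :
    rhoSharp ρ (x + y) ≤ rhoSharp ρ x + rhoSharp ρ y := by
  have := hρ.rhoNorm_add_le x y
  have := hρ.rhoNorm_add_le (star x) (star y)
  rw [rhoSharp, rhoSharp, rhoSharp, star_add]; linarith

lemma rhoSharp_smul (hρ : IsState ρ) (c : ℂ) (x : B) : rhoSharp ρ (c • x) = ‖c‖ * rhoSharp ρ x := by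
  rw [rhoSharp, rhoSharp, star_smul, hρ.rhoNorm_smul, hρ.rhoNorm_smul, Complex.star_def,
    Complex.norm_conj, ← mul_add, mul_div_assoc]

lemma rhoSharp_le_add_norm_sub (hρ : IsState ρ) (x y : B) :
    rhoSharp ρ x ≤ rhoSharp ρ y + ‖x - y‖ := by
  have := hρ.rhoSharp_add_le y (x - y)
  rw [add_sub_cancel] at this
  linarith [hρ.rhoSharp_le_norm (x - y)]

lemma rhoSharp_mul_le (hρ : IsState ρ) (a b : B) :
    rhoSharp ρ (a * b) ≤ ‖a‖ * rhoSharp ρ b + ‖b‖ * rhoSharp ρ a := by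
  have hab := hρ.rhoNorm_mul_le a b
  have hba := hρ.rhoNorm_mul_le (star b) (star a)
  rw [norm_star] at hba
  have := mul_le_mul_of_nonneg_left (rhoNorm_le_two_mul_rhoSharp ρ b) (norm_nonneg a)
  have := mul_le_mul_of_nonneg_left
    ((rhoNorm_le_two_mul_rhoSharp ρ (star a)).trans_eq (by rw [rhoSharp_star])) (norm_nonneg b)
  rw [rhoSharp, star_mul]; linarith

/-- Heredity inside `B`: every `0 ≤ y ≤ x` in `B_∞` lifts to `c* c ≤ c* c + d* d`. -/
lemma rhoSharp_star_mul_self_le (hρ : IsState ρ) (c d : B) :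
    rhoSharp ρ (star c * c) ≤ ‖c‖ * √(rhoSharp ρ (star c * c + star d * d)) := by
  have hsa : IsSelfAdjoint (star c * c + star d * d) :=
    (IsSelfAdjoint.star_mul_self c).add (.star_mul_self d)
  calc rhoSharp ρ (star c * c) = rhoNorm ρ (star c * c) :=
        rhoSharp_eq_rhoNorm ρ (.star_mul_self c)
    _ ≤ ‖c‖ * rhoNorm ρ c := by simpa using hρ.rhoNorm_mul_le (star c) c
    _ ≤ ‖c‖ * √(rhoSharp ρ (star c * c + star d * d)) := by
        gcongr
        rw [rhoSharp_eq_rhoNorm ρ hsa]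
        refine Real.sqrt_le_sqrt ?_
        calc (ρ (star c * c)).re ≤ (ρ (star c * c + star d * d)).re := by
              simpa [map_add] using (hρ.2 d).1
          _ ≤ ‖ρ (star c * c + star d * d)‖ := Complex.re_le_norm _
          _ ≤ rhoNorm ρ (star c * c + star d * d) := hρ.norm_apply_le_rhoNorm _

end IsState

section FunctionalCalculus

variable {A : Type*} [NonUnitalCStarAlgebra A] {a : A} {c : ℝ}

lemma norm_le_add_norm_cfcₙ_max_abs_sub (ha : IsSelfAdjoint a) (hc : 0 ≤ c) :
    ‖a‖ ≤ c + ‖cfcₙ (fun t : ℝ => max (|t| - c) 0) a‖ := by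
  conv_lhs => rw [← cfcₙ_id' ℝ a]
  refine norm_cfcₙ_le fun t ht => ?_
  have := norm_apply_le_norm_cfcₙ (fun t : ℝ => max (|t| - c) 0) a ht
  rw [Real.norm_eq_abs, abs_of_nonneg (le_max_right _ _)] at this
  rw [Real.norm_eq_abs]
  linarith [le_max_left (|t| - c) 0]

lemma cfcₙ_max_abs_sub_eq_zero (ha : IsSelfAdjoint a) (hac : ‖a‖ ≤ c) :
    cfcₙ (fun t : ℝ => max (|t| - c) 0) a = 0 := by
  refine (cfcₙ_congr fun t ht => ?_).trans (cfcₙ_zero ℝ a)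
  have := norm_apply_le_norm_cfcₙ (id : ℝ → ℝ) a ht
  rw [cfcₙ_id ℝ a, Real.norm_eq_abs, id] at this
  exact max_eq_right (by linarith)

end FunctionalCalculus

section SequenceAlgebra

open scoped CStarAlgebra

variable {B : Type*} [NonUnitalCStarAlgebra B]

def lp.evalNonUnitalStarAlgHom (n : ℕ) : lp (fun _ : ℕ => B) ∞ →⋆ₙₐ[ℂ] B where
  toFun x := x n
  map_smul' _ _ := rfl
  map_zero' := rfl
  map_add' _ _ := rfl
  map_mul' _ _ := rfl
  map_star' _ := rfl

/-- Cut `w* w` off at the level `‖π w‖²` by functional calculus: the part above the level lies in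
the kernel of `π`, hence tends to zero coordinatewise. -/
lemma eventually_norm_lt_of_norm_map_lt {Q : Type*} [NonUnitalCStarAlgebra Q]
    {π : lp (fun _ : ℕ => B) ∞ →⋆ₙₐ[ℂ] Q}
    (hπker : ∀ x, π x = 0 → Tendsto (fun n => ‖x n‖) atTop (𝓝 0))
    {w : lp (fun _ : ℕ => B) ∞} {r : ℝ} (hw : ‖π w‖ < r) :
    ∀ᶠ n in atTop, ‖w n‖ < r := by
  -- not found by instance search for `lp`
  have : NonUnitalContinuousFunctionalCalculus ℝ (lp (fun _ : ℕ => B) ∞) IsSelfAdjoint :=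
    IsSelfAdjoint.instNonUnitalContinuousFunctionalCalculus
  set q := star w * w
  set c := ‖π q‖
  have hq : IsSelfAdjoint q := .star_mul_self w
  have hc : 0 ≤ c := norm_nonneg _
  have hcr : c < r * r := by
    have : c = ‖π w‖ * ‖π w‖ := by
      rw [show c = ‖π (star w * w)‖ from rfl, map_mul, map_star, CStarRing.norm_star_mul_self]
    nlinarith [norm_nonneg (π w)]
  have hcut : Tendsto (fun n => ‖cfcₙ (fun t : ℝ => max (|t| - c) 0) (q n)‖) atTop (𝓝 0) := by
    refine (hπker (cfcₙ (fun t : ℝ => max (|t| - c) 0) q) ?_).congr fun n => ?_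
    · rw [NonUnitalStarAlgHomClass.map_cfcₙ π _ q (ha := hq) (hφa := hq.map π)]
      exact cfcₙ_max_abs_sub_eq_zero (hq.map π) le_rfl
    · exact congrArg norm
        (NonUnitalStarAlgHomClass.map_cfcₙ (lp.evalNonUnitalStarAlgHom n) _ q (ha := hq)
          (hφa := hq.map _))
  filter_upwards [hcut.eventually (gt_mem_nhds (sub_pos.2 hcr))] with n hn
  have hqn : ‖q n‖ = ‖w n‖ * ‖w n‖ := CStarRing.norm_star_mul_self
  have : ‖q n‖ ≤ c + ‖cfcₙ (fun t : ℝ => max (|t| - c) 0) (q n)‖ :=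
    norm_le_add_norm_cfcₙ_max_abs_sub (hq.map (lp.evalNonUnitalStarAlgHom n)) hc
  refine (mul_self_lt_mul_self_iff (norm_nonneg _) ((norm_nonneg _).trans hw.le)).2 ?_
  linarith

end SequenceAlgebra

section StateKernel

variable {B : Type*} [NonUnitalCStarAlgebra B] [PartialOrder B] [StarOrderedRing B]
  {ρ : B →L[ℂ] ℂ} {Q : Type*} [NonUnitalCStarAlgebra Q] {π : lp (fun _ : ℕ => B) ∞ →⋆ₙₐ[ℂ] Q}

namespace IsState

def nullSubalgebra (hρ : IsState ρ) : NonUnitalStarSubalgebra ℂ (lp (fun _ : ℕ => B) ∞) where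
  carrier := {x | Tendsto (fun n => rhoSharp ρ (x n)) atTop (𝓝 0)}
  zero_mem' := by simp [rhoSharp, rhoNorm]
  add_mem' {x y} hx hy := squeeze_zero (fun _ => rhoSharp_nonneg ρ _)
    (fun n => hρ.rhoSharp_add_le (x n) (y n)) (by simpa using hx.add hy)
  mul_mem' {x y} hx hy := by
    refine squeeze_zero (fun _ => rhoSharp_nonneg ρ _) (fun n => ?_)
      (by simpa using (hy.const_mul ‖x‖).add (hx.const_mul ‖y‖))
    refine (hρ.rhoSharp_mul_le (x n) (y n)).trans ?_
    have hxn := lp.norm_apply_le_norm ENNReal.top_ne_zero x n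
    have hyn := lp.norm_apply_le_norm ENNReal.top_ne_zero y n
    gcongr <;> exact rhoSharp_nonneg ρ _
  smul_mem' c x hx := by simpa [hρ.rhoSharp_smul] using hx.const_mul ‖c‖
  star_mem' hx := by simpa [rhoSharp_star] using hx

lemma mem_nullSubalgebra_of_map_eq (hρ : IsState ρ)
    (hπker : ∀ x, π x = 0 → Tendsto (fun n => ‖x n‖) atTop (𝓝 0))
    {x y : lp (fun _ : ℕ => B) ∞} (hxy : π x = π y) (hy : y ∈ hρ.nullSubalgebra) :
    x ∈ hρ.nullSubalgebra := by
  have hsub : Tendsto (fun n => ‖(x - y) n‖) atTop (𝓝 0) :=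
    hπker _ (by rw [map_sub, hxy, sub_self])
  exact squeeze_zero (fun _ => rhoSharp_nonneg ρ _)
    (fun n => hρ.rhoSharp_le_add_norm_sub (x n) (y n)) (by simpa using hy.add hsub)

def stateKernel (hρ : IsState ρ) (π : lp (fun _ : ℕ => B) ∞ →⋆ₙₐ[ℂ] Q) :
    NonUnitalStarSubalgebra ℂ Q :=
  hρ.nullSubalgebra.map π

lemma map_mem_stateKernel_iff (hρ : IsState ρ)
    (hπker : ∀ x, π x = 0 → Tendsto (fun n => ‖x n‖) atTop (𝓝 0)) (x : lp (fun _ : ℕ => B) ∞) :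
    π x ∈ hρ.stateKernel π ↔ x ∈ hρ.nullSubalgebra :=
  ⟨fun ⟨_, hy, hyx⟩ => hρ.mem_nullSubalgebra_of_map_eq hπker hyx.symm hy,
    fun hx => ⟨x, hx, rfl⟩⟩

lemma isClosed_stateKernel (hρ : IsState ρ) (hπsurj : Function.Surjective π)
    (hπker : ∀ x, π x = 0 → Tendsto (fun n => ‖x n‖) atTop (𝓝 0)) :
    IsClosed (hρ.stateKernel π : Set Q) := by
  refine isClosed_of_closure_subset fun z hz => ?_
  obtain ⟨x, rfl⟩ := hπsurj z
  refine (hρ.map_mem_stateKernel_iff hπker x).2 <|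
    NormedAddGroup.tendsto_nhds_zero.2 fun ε hε => ?_
  obtain ⟨_, ⟨y, hy, rfl⟩, hxy⟩ := Metric.mem_closure_iff.1 hz (ε / 2) (half_pos hε)
  have hxy' : ‖π (x - y)‖ < ε / 2 := by rw [map_sub, ← dist_eq_norm]; exact hxy
  filter_upwards [eventually_norm_lt_of_norm_map_lt hπker hxy',
    hy.eventually (gt_mem_nhds (half_pos hε))] with n hxyn hyn
  have := hρ.rhoSharp_le_add_norm_sub (x n) (y n)
  rw [Real.norm_of_nonneg (rhoSharp_nonneg ρ _)]
  exact this.trans_lt (by simpa using add_lt_add hyn hxyn)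

lemma mem_stateKernel_of_nonneg_of_le [PartialOrder Q] [StarOrderedRing Q] (hρ : IsState ρ)
    (hπsurj : Function.Surjective π)
    (hπker : ∀ x, π x = 0 → Tendsto (fun n => ‖x n‖) atTop (𝓝 0))
    {x y : Q} (hx : x ∈ hρ.stateKernel π) (hy : 0 ≤ y) (hyx : y ≤ x) :
    y ∈ hρ.stateKernel π := by
  obtain ⟨s, rfl⟩ := CStarAlgebra.nonneg_iff_eq_star_mul_self.mp hy
  obtain ⟨t, ht⟩ := CStarAlgebra.nonneg_iff_eq_star_mul_self.mp (sub_nonneg.2 hyx)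
  obtain ⟨c, rfl⟩ := hπsurj s
  obtain ⟨d, rfl⟩ := hπsurj t
  have hsum : π (star c * c + star d * d) = x := by
    rw [map_add, map_mul, map_mul, map_star, map_star, ← ht, add_sub_cancel]
  have hnull := (hρ.map_mem_stateKernel_iff hπker _).1 (hsum ▸ hx)
  rw [← map_star, ← map_mul, hρ.map_mem_stateKernel_iff hπker]
  refine squeeze_zero (fun _ => rhoSharp_nonneg ρ _)
    (fun n => (hρ.rhoSharp_star_mul_self_le (c n) (d n)).trans ?_)
    (by simpa using (hnull.sqrt).const_mul ‖c‖)
  exact mul_le_mul_of_nonneg_right (lp.norm_apply_le_norm ENNReal.top_ne_zero c n)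
    (Real.sqrt_nonneg _)

end IsState

end StateKernel

theorem statement0
    {B : Type*} [NonUnitalCStarAlgebra B] (ρ : B →L[ℂ] ℂ) (hρ : IsState ρ)
    -- the sequence algebra `B_∞ = ℓ∞(ℕ, B)/c₀(ℕ, B)`, encoded abstractly:
    {Binf : Type*} [NonUnitalCStarAlgebra Binf] [PartialOrder Binf] [StarOrderedRing Binf]
    (πB : lp (fun _ : ℕ => B) ∞ →⋆ₙₐ[ℂ] Binf)
    (hπsurj : Function.Surjective πB)
    (hπker : ∀ x : lp (fun _ : ℕ => B) ∞,
      πB x = 0 ↔ Tendsto (fun n => ‖x n‖) atTop (𝓝 0)) :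
    -- the state-kernel `J_{B,ρ}`
    let J : Set Binf := {z | ∃ x : lp (fun _ : ℕ => B) ∞,
      πB x = z ∧ Tendsto (fun n => rhoSharp ρ (x n)) atTop (𝓝 0)}
    -- well-definedness: membership is independent of the choice of representative
    (∀ x : lp (fun _ : ℕ => B) ∞,
        πB x ∈ J ↔ Tendsto (fun n => rhoSharp ρ (x n)) atTop (𝓝 0)) ∧
    -- closed under addition
    (∀ z w : Binf, z ∈ J → w ∈ J → z + w ∈ J) ∧
    -- closed under scalar multiplication
    (∀ (c : ℂ) (z : Binf), z ∈ J → c • z ∈ J) ∧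
    -- closed under multiplication
    (∀ z w : Binf, z ∈ J → w ∈ J → z * w ∈ J) ∧
    -- closed under adjoints
    (∀ z : Binf, z ∈ J → star z ∈ J) ∧
    -- norm-closed
    IsClosed J ∧
    -- hereditary
    (∀ x y : Binf, x ∈ J → 0 ≤ y → y ≤ x → y ∈ J) := by
  intro J
  let := CStarAlgebra.spectralOrder B
  have := CStarAlgebra.spectralOrderedRing B
  have hπker' x := (hπker x).1
  have hJ : J = hρ.stateKernel πB := by
    ext z
    exact ⟨fun ⟨x, hxz, hx⟩ => ⟨x, hx, hxz⟩, fun ⟨x, hx, hxz⟩ => ⟨x, hxz, hx⟩⟩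
  rw [hJ]
  exact ⟨hρ.map_mem_stateKernel_iff hπker', fun _ _ => add_mem,
    fun c _ => SMulMemClass.smul_mem c, fun _ _ => mul_mem, fun _ => star_mem,
    hρ.isClosed_stateKernel hπsurj hπker',
    fun _ _ => hρ.mem_stateKernel_of_nonneg_of_le hπsurj hπker'⟩
end
end

section
/- Let B = M₂(ℂ) and let ρ be the state ρ(x) = x₁₁ (compression to the (1,1) entry). Then the constant sequence g_n := e₁₂ and the sequence f_n := (1 + (−1)^n) e₂₂ (where e_{ij} are the matrix units) are bounded sequences in B that are both Cauchy with respect to ‖·‖_{ρ,#}, but the product sequence g_n f_n = (1 + (−1)^n) e₁₂ is not Cauchy with respect to ‖·‖_{ρ,#}. In particular, for a non-faithful state ρ the set S_{B,ρ} of ‖·‖_{ρ,#}-Cauchy bounded sequences need not be closed under multiplication. -/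
/-!
Since `ρ` only reads the (1,1) entry, for `a = c • e_{ij}` the two halves `√(ρ(a*a))` and
`√(ρ(aa*))` of `2‖a‖_{ρ,#}` are `|c|` if `j = 1`, resp. `i = 1`, and `0` otherwise. The
differences `f_m - f_k` are multiples of `e₂₂` and so have seminorm `0`, whereas
`g_{2N} f_{2N} - g_{2N+1} f_{2N+1} = 2 e₁₂` has seminorm `1` for every `N`.
-/

open Matrix

section SingleCorner

variable {𝕜 n : Type*} [RCLike 𝕜] [Fintype n] [DecidableEq n]

theorem sqrt_re_conjTranspose_mul_single_apply (p i j : n) (c : 𝕜) :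
    √(RCLike.re (((single i j c)ᴴ * single i j c) p p)) = if j = p then ‖c‖ else 0 := by
  rw [conjTranspose_single, single_mul_single_same, RCLike.star_def, RCLike.conj_mul]
  by_cases h : j = p <;> simp [h]

theorem sqrt_re_single_mul_conjTranspose_apply (p i j : n) (c : 𝕜) :
    √(RCLike.re ((single i j c * (single i j c)ᴴ) p p)) = if i = p then ‖c‖ else 0 := by
  rw [conjTranspose_single, single_mul_single_same, RCLike.star_def, RCLike.mul_conj]
  by_cases h : i = p <;> simp [h]

end SingleCorner

theorem norm_single_apply_le {𝕜 m n : Type*} [NormedAddCommGroup 𝕜] [DecidableEq m]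
    [DecidableEq n] (i : m) (j : n) (i' : m) (j' : n) (c : 𝕜) : ‖single i j c i' j'‖ ≤ ‖c‖ := by
  rw [single_apply]
  split_ifs <;> simp

theorem norm_one_add_neg_one_pow_le (n : ℕ) : ‖1 + (-1 : ℂ) ^ n‖ ≤ 2 := by
  rcases neg_one_pow_eq_or ℂ n with h | h <;> norm_num [h]

theorem statement3 :
    -- matrix units
    let e : Fin 2 → Fin 2 → Matrix (Fin 2) (Fin 2) ℂ := fun i j => Matrix.single i j 1
    -- the state `ρ`: compression to the (1,1) corner
    let ρ : Matrix (Fin 2) (Fin 2) ℂ → ℂ := fun x => x 0 0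
    -- the `(ρ,#)`-seminorm `‖a‖_{ρ,#} = (√(ρ(a* a)) + √(ρ(a a*)))/2`
    let rhoSharp : Matrix (Fin 2) (Fin 2) ℂ → ℝ := fun a =>
      (Real.sqrt (ρ (star a * a)).re + Real.sqrt (ρ (a * star a)).re) / 2
    let g : ℕ → Matrix (Fin 2) (Fin 2) ℂ := fun _ => e 0 1
    let f : ℕ → Matrix (Fin 2) (Fin 2) ℂ := fun n => (1 + (-1 : ℂ) ^ n) • e 1 1
    -- `g` and `f` are bounded sequences
    (∃ M : ℝ, ∀ (n : ℕ) (i j : Fin 2), ‖g n i j‖ ≤ M) ∧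
    (∃ M : ℝ, ∀ (n : ℕ) (i j : Fin 2), ‖f n i j‖ ≤ M) ∧
    -- `g` is `(ρ,#)`-Cauchy
    (∀ ε > (0 : ℝ), ∃ N : ℕ, ∀ m ≥ N, ∀ k ≥ N, rhoSharp (g m - g k) < ε) ∧
    -- `f` is `(ρ,#)`-Cauchy
    (∀ ε > (0 : ℝ), ∃ N : ℕ, ∀ m ≥ N, ∀ k ≥ N, rhoSharp (f m - f k) < ε) ∧
    -- the product sequence is `(1 + (−1)^n) e₁₂` ...
    (∀ n : ℕ, g n * f n = (1 + (-1 : ℂ) ^ n) • e 0 1) ∧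
    -- ... and it is not `(ρ,#)`-Cauchy
    ¬ (∀ ε > (0 : ℝ), ∃ N : ℕ, ∀ m ≥ N, ∀ k ≥ N, rhoSharp (g m * f m - g k * f k) < ε) := by
  intro e ρ rhoSharp g f
  have sharp_single : ∀ (i j : Fin 2) (c : ℂ), rhoSharp (single i j c) =
      ((if j = 0 then ‖c‖ else 0) + (if i = 0 then ‖c‖ else 0)) / 2 := by
    intro i j c
    simp only [rhoSharp, ρ, star_eq_conjTranspose, ← RCLike.re_to_complex,
      sqrt_re_conjTranspose_mul_single_apply, sqrt_re_single_mul_conjTranspose_apply]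
  have f_eq_single : ∀ n, f n = single 1 1 (1 + (-1 : ℂ) ^ n) := by simp [f, e, smul_single]
  have mul_eq : ∀ n, g n * f n = (1 + (-1 : ℂ) ^ n) • e 0 1 := by
    simp [g, f_eq_single, e, single_mul_single_same, smul_single]
  refine ⟨⟨1, fun n i j => ?_⟩, ⟨2, fun n i j => ?_⟩, fun ε hε => ⟨0, fun m _ k _ => ?_⟩,
    fun ε hε => ⟨0, fun m _ k _ => ?_⟩, mul_eq, fun hcauchy => ?_⟩
  · simpa using norm_single_apply_le 0 1 i j (1 : ℂ)
  · rw [f_eq_single]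
    exact (norm_single_apply_le ..).trans (norm_one_add_neg_one_pow_le n)
  · rw [sub_self, ← single_zero 0 0, sharp_single]
    simpa using hε
  · rw [f_eq_single, f_eq_single, sub_eq_add_neg, single_neg, ← single_add, sharp_single]
    simpa using hε
  · obtain ⟨N, hN⟩ := hcauchy 1 one_pos
    have h := hN (2 * N) (by omega) (2 * N + 1) (by omega)
    rw [mul_eq, mul_eq, ← sub_smul, smul_single, sharp_single] at h
    norm_num [pow_succ, pow_mul] at h
end

section
/- Let 0 → I → E → D → 0 be a unital extension of C*-algebras (q : E → D a unital surjective *-homomorphism with kernel I, E unital) where I is σ-unital and satisfies the Hjelmborg–Rørdam criterion (equivalently, I is stable). Then an element x ∈ E is full in E if and only if q(x) is full in D. Consequently, a *-homomorphism φ : A → E from a C*-algebra A is full if and only if q ∘ φ is full, and (for the forced unitizations) φ is unitizably full if and only if q ∘ φ is unitizably full. -/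
/-!
STATEMENT 4: For a unital extension `0 → I → E → D → 0` of C*-algebras with `I = ker q`
σ-unital and satisfying the Hjelmborg–Rørdam criterion (i.e. stable), an element `x ∈ E` is
full iff `q(x)` is full; consequently a *-homomorphism `φ : A → E` is full iff `q ∘ φ` is,
and unitizably full iff `q ∘ φ` is.

Fullness of `a` in `D` is: the closed two-sided ideal generated by `a` is all of `D`.
Unitizable fullness of `φ : A → E` (with `E` unital) is encoded by: for every `a ∈ A` and
`λ ∈ ℂ` not both zero, the element `φ(a) + λ·1_E` (the image of `a + λ1 ∈ A†` under `φ†`)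
is full.
-/

noncomputable section

/-- An element of a C*-algebra is full if the closed two-sided ideal it generates is
everything. -/
def IsFullElem {D : Type*} [NonUnitalCStarAlgebra D] (a : D) : Prop :=
  closure ((TwoSidedIdeal.span {a} : TwoSidedIdeal D) : Set D) = Set.univ

/-- A subset `I` of a C*-algebra satisfies the Hjelmborg–Rørdam criterion if for every
positive `x ∈ I` and `ε > 0` there is `y ∈ I` with `‖x − y y*‖ < ε` and
`‖(y y*)(y* y)‖ < ε`. -/
def HRCriterion {E : Type*} [NonUnitalCStarAlgebra E] (I : Set E) : Prop :=
  ∀ x ∈ I, (∃ c : E, x = star c * c) → ∀ ε > (0 : ℝ),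
    ∃ y ∈ I, ‖x - y * star y‖ < ε ∧ ‖(y * star y) * (star y * y)‖ < ε

/-- A subset `I` of a C*-algebra is σ-unital if it contains a strictly positive element. -/
def SigmaUnitalSet {E : Type*} [NonUnitalCStarAlgebra E] (I : Set E) : Prop :=
  ∃ h ∈ I, (∃ c : E, h = star c * c) ∧ closure {z : E | ∃ a ∈ I, z = h * a * h} = I

/-!
In a unital C*-algebra an element is full iff the ideal it generates contains `1`: an ideal
with an element within distance `1` of `1` contains a unit. If `q x` is full, surjectivity
lifts this to some `r` in the ideal `J` generated by `x` with `q r = 1`, and then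
`p = (1 - r⋆r)²` is a positive element of `ker q` with `1 - p ∈ J`. The Hjelmborg–Rørdam
criterion gives `y` with `u = y y⋆ ≈ p` and `u (y⋆y) ≈ 0`. Up to small errors modulo `J`,
`u ≈ 1`, hence `y⋆y ≈ u (y⋆y) ≈ 0` and `1 ≈ u² = y (y⋆y) y⋆ ≈ 0`, so `1` is within
distance `1` of `J`.
-/

open Function Pointwise

namespace TwoSidedIdeal

theorem coe_span_eq_addSubgroupClosure {R : Type*} [Ring R] (s : Set R) :
    (span s : Set R) = AddSubgroup.closure (Set.univ * s * Set.univ) :=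
  Set.ext fun _ => mem_span_iff_mem_addSubgroup_closure

theorem image_span_of_surjective {R S F : Type*} [Ring R] [Ring S] [FunLike F R S]
    [RingHomClass F R S] (f : F) (hf : Surjective f) (s : Set R) :
    f '' (span s : Set R) = span (f '' s) := by
  rw [coe_span_eq_addSubgroupClosure, coe_span_eq_addSubgroupClosure]
  change (f : R →+ S) '' _ = _
  rw [← AddSubgroup.coe_map, AddMonoidHom.map_closure, AddMonoidHom.coe_coe, Set.image_mul,
    Set.image_mul, Set.image_univ_of_surjective hf]

theorem span_le_comap_span {R S F : Type*} [NonUnitalNonAssocRing R] [NonUnitalNonAssocRing S]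
    [FunLike F R S] [NonUnitalRingHomClass F R S] (f : F) (s : Set R) :
    span s ≤ comap f (span (f '' s)) :=
  span_le.mpr fun _ hx => (mem_comap f).mpr (subset_span (Set.mem_image_of_mem f hx))

theorem one_mem_of_isUnit_mem {R : Type*} [Ring R] (J : TwoSidedIdeal R) {u : R} (hu : IsUnit u)
    (huJ : u ∈ J) : (1 : R) ∈ J := by
  simpa using J.mul_mem_left (↑hu.unit⁻¹) u huJ

section ApproxMem

variable {R : Type*} [NonUnitalNormedRing R] (J : TwoSidedIdeal R)

def ApproxMem (δ : ℝ) (x : R) : Prop := ∃ w ∈ J, ‖x - w‖ ≤ δ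

variable {J}

theorem ApproxMem.add {δ δ' : ℝ} {x x' : R} (hx : J.ApproxMem δ x) (hx' : J.ApproxMem δ' x') :
    J.ApproxMem (δ + δ') (x + x') := by
  obtain ⟨w, hw, hxw⟩ := hx
  obtain ⟨w', hw', hxw'⟩ := hx'
  refine ⟨w + w', J.add_mem hw hw', ?_⟩
  calc ‖x + x' - (w + w')‖ = ‖(x - w) + (x' - w')‖ := by rw [add_sub_add_comm]
    _ ≤ δ + δ' := (norm_add_le _ _).trans (add_le_add hxw hxw')

theorem ApproxMem.mul_left {δ : ℝ} {x : R} (hx : J.ApproxMem δ x) (c : R) :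
    J.ApproxMem (‖c‖ * δ) (c * x) := by
  obtain ⟨w, hw, hxw⟩ := hx
  refine ⟨c * w, J.mul_mem_left c w hw, ?_⟩
  rw [← mul_sub]
  exact (norm_mul_le _ _).trans (mul_le_mul_of_nonneg_left hxw (norm_nonneg c))

theorem ApproxMem.mul_right {δ : ℝ} {x : R} (hx : J.ApproxMem δ x) (c : R) :
    J.ApproxMem (δ * ‖c‖) (x * c) := by
  obtain ⟨w, hw, hxw⟩ := hx
  refine ⟨w * c, J.mul_mem_right w c hw, ?_⟩
  rw [← sub_mul]
  exact (norm_mul_le _ _).trans (mul_le_mul_of_nonneg_right hxw (norm_nonneg c))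

theorem approxMem_of_norm_le {δ : ℝ} {x : R} (hx : ‖x‖ ≤ δ) : J.ApproxMem δ x :=
  ⟨0, J.zero_mem, by rwa [sub_zero]⟩

theorem ApproxMem.mono {δ δ' : ℝ} {x : R} (hx : J.ApproxMem δ x) (h : δ ≤ δ') :
    J.ApproxMem δ' x :=
  let ⟨w, hw, hxw⟩ := hx
  ⟨w, hw, hxw.trans h⟩

end ApproxMem

theorem one_mem_of_approxMem_one {R : Type*} [NormedRing R] [HasSummableGeomSeries R]
    {J : TwoSidedIdeal R} {δ : ℝ} (h : J.ApproxMem δ 1) (hδ : δ < 1) : (1 : R) ∈ J := by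
  obtain ⟨w, hw, hw1⟩ := h
  refine J.one_mem_of_isUnit_mem ?_ hw
  simpa using isUnit_one_sub_of_norm_lt_one (hw1.trans_lt hδ)

theorem one_mem_of_one_sub_mem_of_approx_orthogonal {E : Type*} [NormedRing E]
    [StarRing E] [CStarRing E] [CompleteSpace E] {J : TwoSidedIdeal E} {p : E}
    (hp : 1 - p ∈ J)
    (happrox : ∀ ε > (0 : ℝ), ∃ y : E, ‖p - y * star y‖ < ε ∧ ‖y * star y * (star y * y)‖ < ε) :
    (1 : E) ∈ J := by
  set B : ℝ := ‖p‖ + 1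
  set ε : ℝ := 1 / (2 * (B + 1) ^ 2)
  have hB : 0 ≤ B := by positivity
  have hε : 0 < ε := by positivity
  have hε1 : ε ≤ 1 := by
    rw [div_le_one (by positivity)]
    nlinarith
  obtain ⟨y, hpu, huv⟩ := happrox ε hε
  set u := y * star y
  set v := star y * y
  have hu : ‖u‖ ≤ B := by
    calc ‖u‖ = ‖p - (p - u)‖ := by rw [sub_sub_cancel]
      _ ≤ ‖p‖ + ‖p - u‖ := norm_sub_le _ _
      _ ≤ B := by linarith
  have hv : ‖v‖ ≤ B := by
    rwa [CStarRing.norm_star_mul_self, ← CStarRing.norm_self_mul_star]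
  have hy : ‖y‖ * ‖star y‖ ≤ B := by
    rwa [norm_star, ← CStarRing.norm_self_mul_star]
  have h₁ : J.ApproxMem ε (1 - u) :=
    ⟨1 - p, hp, by rw [sub_sub_sub_cancel_left]; exact hpu.le⟩
  have h₂ : J.ApproxMem (ε * B + ε) v := by
    have := (h₁.mul_right v).add (approxMem_of_norm_le (J := J) huv.le)
    rw [sub_mul, one_mul, sub_add_cancel] at this
    exact this.mono (by gcongr)
  have h₃ : J.ApproxMem (B * (ε * B + ε)) (u * u) := by
    have := (h₂.mul_left y).mul_right (star y)
    rw [show y * v * star y = u * u by simp only [u, v, mul_assoc], mul_right_comm] at this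
    exact this.mono (mul_le_mul_of_nonneg_right hy (by positivity))
  have h₄ : J.ApproxMem (ε + ε * B) (1 - u * u) := by
    have := h₁.add (h₁.mul_right u)
    rw [show 1 - u + (1 - u) * u = 1 - u * u by noncomm_ring] at this
    exact this.mono (by gcongr)
  have h₅ := h₃.add h₄
  rw [add_sub_cancel] at h₅
  refine one_mem_of_approxMem_one h₅ ?_
  calc B * (ε * B + ε) + (ε + ε * B) = ε * (B + 1) ^ 2 := by ring
    _ < 1 := by simp only [ε]; field_simp; norm_num

end TwoSidedIdeal

open TwoSidedIdeal

theorem isFullElem_iff_one_mem_span {E : Type*} [CStarAlgebra E] (x : E) :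
    IsFullElem x ↔ (1 : E) ∈ span {x} := by
  refine ⟨fun hx => ?_, fun h => ?_⟩
  · have h1 : (1 : E) ∈ closure (span {x} : Set E) := hx ▸ Set.mem_univ _
    obtain ⟨w, hw, hdist⟩ := Metric.mem_closure_iff.mp h1 1 one_pos
    exact one_mem_of_approxMem_one ⟨w, hw, (dist_eq_norm 1 w).ge⟩ hdist
  · rw [IsFullElem, (one_mem_iff _).mp h, coe_top, closure_univ]

theorem IsFullElem.map {E D F : Type*} [CStarAlgebra E] [CStarAlgebra D] [FunLike F E D]
    [RingHomClass F E D] (f : F) {x : E} (hx : IsFullElem x) : IsFullElem (f x) := by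
  rw [isFullElem_iff_one_mem_span] at hx ⊢
  simpa only [mem_comap, map_one, Set.image_singleton] using span_le_comap_span f {x} hx

theorem IsFullElem.of_map {E D : Type*} [CStarAlgebra E] [CStarAlgebra D] (q : E →⋆ₐ[ℂ] D)
    (hq : Surjective q) (hHR : HRCriterion {x : E | q x = 0}) {x : E}
    (hx : IsFullElem (q x)) : IsFullElem x := by
  rw [isFullElem_iff_one_mem_span] at hx ⊢
  obtain ⟨r, hr, hqr⟩ : ∃ r ∈ span {x}, q r = 1 := by
    rwa [← SetLike.mem_coe, ← Set.image_singleton, ← image_span_of_surjective q hq] at hx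
  set s := star r * r
  have hs : s ∈ span {x} := mul_mem_left _ _ _ hr
  have hqs : q s = 1 := by simp only [s, map_mul, map_star, hqr, star_one, mul_one]
  set c := 1 - s
  have hc : star c = c := by simp only [c, s, star_sub, star_one, star_mul, star_star]
  refine one_mem_of_one_sub_mem_of_approx_orthogonal (p := star c * c) ?_ fun ε hε => ?_
  · rw [hc, show 1 - c * c = s + s - s * s by simp only [c]; noncomm_ring]
    exact sub_mem _ (add_mem _ hs hs) (mul_mem_left _ _ _ hs)
  · have hqc : q (star c * c) = 0 := by simp [c, hqs]
    obtain ⟨y, -, hy⟩ := hHR _ hqc ⟨c, rfl⟩ ε hε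
    exact ⟨y, hy⟩

theorem statement4_general
    {A E D : Type*} [NonUnitalCStarAlgebra A] [CStarAlgebra E] [CStarAlgebra D]
    -- the unital extension `0 → I → E → D → 0`, with `I = ker q`
    (q : E →⋆ₐ[ℂ] D) (hq : Function.Surjective q)
    (hHR : HRCriterion {x : E | q x = 0}) :
    -- an element is full iff its image is full
    (∀ x : E, IsFullElem x ↔ IsFullElem (q x)) ∧
    -- a *-homomorphism into `E` is full iff its composition with `q` is full
    (∀ φ : A →⋆ₙₐ[ℂ] E,
      ((∀ a : A, a ≠ 0 → IsFullElem (φ a)) ↔ (∀ a : A, a ≠ 0 → IsFullElem (q (φ a))))) ∧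
    -- a *-homomorphism into `E` is unitizably full iff its composition with `q` is
    (∀ φ : A →⋆ₙₐ[ℂ] E,
      ((∀ (a : A) (lam : ℂ), ¬(a = 0 ∧ lam = 0) → IsFullElem (φ a + lam • (1 : E))) ↔
       (∀ (a : A) (lam : ℂ), ¬(a = 0 ∧ lam = 0) → IsFullElem (q (φ a) + lam • (1 : D))))) := by
  have full_iff (x : E) : IsFullElem x ↔ IsFullElem (q x) :=
    ⟨IsFullElem.map q, IsFullElem.of_map q hq hHR⟩
  refine ⟨full_iff, fun φ => forall₂_congr fun a _ => full_iff (φ a), fun φ => ?_⟩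
  refine forall₃_congr fun a lam _ => ?_
  rw [full_iff, map_add, map_smul, map_one]

theorem statement4
    {A E D : Type*} [NonUnitalCStarAlgebra A] [CStarAlgebra E] [CStarAlgebra D]
    -- the unital extension `0 → I → E → D → 0`, with `I = ker q`
    (q : E →⋆ₐ[ℂ] D) (hq : Function.Surjective q)
    (hσ : SigmaUnitalSet {x : E | q x = 0})
    (hHR : HRCriterion {x : E | q x = 0}) :
    -- an element is full iff its image is full
    (∀ x : E, IsFullElem x ↔ IsFullElem (q x)) ∧
    -- a *-homomorphism into `E` is full iff its composition with `q` is full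
    (∀ φ : A →⋆ₙₐ[ℂ] E,
      ((∀ a : A, a ≠ 0 → IsFullElem (φ a)) ↔ (∀ a : A, a ≠ 0 → IsFullElem (q (φ a))))) ∧
    -- a *-homomorphism into `E` is unitizably full iff its composition with `q` is
    (∀ φ : A →⋆ₙₐ[ℂ] E,
      ((∀ (a : A) (lam : ℂ), ¬(a = 0 ∧ lam = 0) → IsFullElem (φ a + lam • (1 : E))) ↔
       (∀ (a : A) (lam : ℂ), ¬(a = 0 ∧ lam = 0) → IsFullElem (q (φ a) + lam • (1 : D))))) :=
  statement4_general q hq hHR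
end
end

section
/- Let 0 → I → E → D → 0 be a purely large extension of C*-algebras (q : E → D the surjective *-homomorphism with kernel I). Then for every positive x ∈ E with x ∉ I, every positive y ∈ I, and every ε > 0, there exists c ∈ I with ‖c* x c − y‖ < ε and ‖c‖² ≤ ‖y‖ / ‖q(x)‖. -/
/-!
STATEMENT 6: In a purely large extension `0 → I → E → D → 0` (with `I = ker q`), for every
positive `x ∈ E \ I`, positive `y ∈ I` and `ε > 0` there is `c ∈ I` with
`‖c* x c − y‖ < ε` and `‖c‖² ≤ ‖y‖/‖q(x)‖`.
-/

noncomputable section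

/-- The extension determined by the surjective *-homomorphism `q` (with ideal `I = ker q`)
is purely large: every positive `y ∈ I` is Cuntz subequivalent (in `E`) to every positive
`x ∈ E` with `x ∉ I`. -/
def PurelyLarge {E D : Type*} [NonUnitalCStarAlgebra E] [NonUnitalCStarAlgebra D]
    (q : E →⋆ₙₐ[ℂ] D) : Prop :=
  ∀ y x : E, q y = 0 → (∃ c : E, y = star c * c) → (∃ c : E, x = star c * c) → q x ≠ 0 →
    ∀ ε > (0 : ℝ), ∃ c : E, ‖star c * x * c - y‖ < ε

open scoped CStarAlgebra

namespace Statement6Aux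

/-- `t ↦ (t - s)₊`. -/
def ff (s t : ℝ) : ℝ := max (t - s) 0

/-- `t ↦ √((t-s)₊ / (t ⊔ s))`, so that `gg s t ^ 2 * t = ff s t`. -/
def gg (s t : ℝ) : ℝ := Real.sqrt (max (t - s) 0) / Real.sqrt (max t s)

lemma ff_cont (s : ℝ) : Continuous (ff s) :=
  (continuous_id.sub continuous_const).max continuous_const

lemma ff_zero {s : ℝ} (hs : 0 < s) : ff s 0 = 0 :=
  max_eq_right (by linarith)

lemma ff_nonneg (s t : ℝ) : 0 ≤ ff s t := le_max_right _ _

lemma gg_cont {s : ℝ} (hs : 0 < s) : Continuous (gg s) := by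
  apply Continuous.div
  · exact Real.continuous_sqrt.comp ((continuous_id.sub continuous_const).max continuous_const)
  · exact Real.continuous_sqrt.comp (continuous_id.max continuous_const)
  · intro t
    have h : 0 < max t s := lt_max_of_lt_right hs
    exact (Real.sqrt_pos.mpr h).ne'

lemma gg_zero {s : ℝ} (hs : 0 < s) : gg s 0 = 0 := by
  rw [gg, max_eq_right (by linarith : (0:ℝ) - s ≤ 0), Real.sqrt_zero, zero_div]

lemma gg_nonneg (s t : ℝ) : 0 ≤ gg s t :=
  div_nonneg (Real.sqrt_nonneg _) (Real.sqrt_nonneg _)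

lemma gg_mul_self {s : ℝ} (hs : 0 < s) (t : ℝ) :
    gg s t * gg s t = max (t - s) 0 / max t s := by
  rw [gg, div_mul_div_comm, Real.mul_self_sqrt (le_max_right _ _),
    Real.mul_self_sqrt (hs.le.trans (le_max_right t s))]

lemma gg_mul_id_mul_gg {s : ℝ} (hs : 0 < s) (t : ℝ) :
    gg s t * t * gg s t = ff s t := by
  have h1 : gg s t * t * gg s t = gg s t * gg s t * t := by ring
  rw [h1, gg_mul_self hs, ff]
  rcases le_or_gt t s with h | h
  · simp [max_eq_right (by linarith : t - s ≤ 0)]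
  · rw [max_eq_left h.le]
    exact div_mul_cancel₀ _ (by linarith : t ≠ 0)

lemma gg_sq_le {s : ℝ} (hs : 0 < s) (t : ℝ) :
    gg s t * gg s t ≤ s⁻¹ * ff s t := by
  rw [gg_mul_self hs, ff, inv_mul_eq_div]
  exact div_le_div_of_nonneg_left (le_max_right _ _) hs (le_max_right t s)

lemma gg_le_one {s : ℝ} (hs : 0 < s) (t : ℝ) : |gg s t| ≤ 1 := by
  rw [abs_of_nonneg (gg_nonneg s t), gg]
  apply div_le_one_of_le₀
  · exact Real.sqrt_le_sqrt (max_le_max (by linarith) hs.le)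
  · exact Real.sqrt_nonneg _

lemma ff_near {s : ℝ} (hs : 0 < s) {t : ℝ} (ht : 0 ≤ t) : |ff s t - t| ≤ s := by
  rw [ff]
  rcases le_total t s with h | h
  · rw [max_eq_right (by linarith), abs_of_nonpos (by linarith)]
    linarith
  · rw [max_eq_left (by linarith), abs_of_nonpos (by linarith)]
    linarith

variable {A : Type*} [NonUnitalCStarAlgebra A]

lemma qsp_star_mul_self_nonneg (u : A) :
    ∀ t ∈ quasispectrum ℝ (star u * u), 0 ≤ t := by
  intro t ht
  rw [Unitization.quasispectrum_eq_spectrum_inr' ℝ ℂ] at ht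
  have h : ((star u * u : A) : Unitization ℂ A)
      = star (u : Unitization ℂ A) * (u : Unitization ℂ A) := by
    rw [Unitization.inr_mul, Unitization.inr_star]
  rw [h] at ht
  exact spectrum_star_mul_self_nonneg t ht

lemma cfc_exists_star_mul_self (f : ℝ → ℝ) (hf : Continuous f) (hf0 : f 0 = 0)
    (hfnn : ∀ t, 0 ≤ f t) (a : A) : ∃ c : A, cfcₙ f a = star c * c := by
  refine ⟨cfcₙ (fun t => Real.sqrt (f t)) a, ?_⟩
  have hsf : Continuous fun t => Real.sqrt (f t) := Real.continuous_sqrt.comp hf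
  have h0 : Real.sqrt (f 0) = 0 := by rw [hf0, Real.sqrt_zero]
  rw [(cfcₙ_predicate (fun t => Real.sqrt (f t)) a).star_eq,
    ← cfcₙ_mul _ _ a hsf.continuousOn h0 hsf.continuousOn h0]
  exact cfcₙ_congr fun t _ => (Real.mul_self_sqrt (hfnn t)).symm

lemma abs_le_norm_of_mem {a : A} (hsa : IsSelfAdjoint a) {t : ℝ}
    (ht : t ∈ quasispectrum ℝ a) : |t| ≤ ‖a‖ := by
  have := norm_apply_le_norm_cfcₙ (id : ℝ → ℝ) a ht (by fun_prop) rfl hsa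
  rwa [cfcₙ_id ℝ a hsa, Real.norm_eq_abs] at this

lemma norm_mem_quasispectrum {a : A} (hsa : IsSelfAdjoint a)
    (hnn : ∀ t ∈ quasispectrum ℝ a, 0 ≤ t) : ‖a‖ ∈ quasispectrum ℝ a := by
  obtain ⟨⟨t, ht, hteq⟩, -⟩ := IsGreatest.norm_cfcₙ (id : ℝ → ℝ) a (by fun_prop) rfl hsa
  rw [cfcₙ_id ℝ a hsa] at hteq
  simp only [id_eq, Real.norm_eq_abs] at hteq
  rw [abs_of_nonneg (hnn t ht)] at hteq
  exact hteq ▸ ht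

lemma cut (a : A) (hsa : IsSelfAdjoint a) {s : ℝ} (hs : 0 < s) :
    cfcₙ (gg s) a * a * cfcₙ (gg s) a = cfcₙ (ff s) a := by
  have hg : ContinuousOn (gg s) (quasispectrum ℝ a) := (gg_cont hs).continuousOn
  have hid : ContinuousOn (id : ℝ → ℝ) (quasispectrum ℝ a) := continuousOn_id
  have h1 : cfcₙ (fun t : ℝ => gg s t * t) a = cfcₙ (gg s) a * cfcₙ (id : ℝ → ℝ) a :=
    cfcₙ_mul (gg s) id a hg (gg_zero hs) hid rfl
  have h2 : cfcₙ (fun t : ℝ => (gg s t * t) * gg s t) a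
      = cfcₙ (fun t : ℝ => gg s t * t) a * cfcₙ (gg s) a :=
    cfcₙ_mul _ (gg s) a (hg.mul hid) (by simp [gg_zero hs]) hg (gg_zero hs)
  calc cfcₙ (gg s) a * a * cfcₙ (gg s) a
      = cfcₙ (gg s) a * cfcₙ (id : ℝ → ℝ) a * cfcₙ (gg s) a := by rw [cfcₙ_id ℝ a hsa]
    _ = cfcₙ (fun t : ℝ => (gg s t * t) * gg s t) a := by rw [h2, h1]
    _ = cfcₙ (ff s) a := cfcₙ_congr fun t _ => gg_mul_id_mul_gg hs t

lemma cut_near (a : A) (hsa : IsSelfAdjoint a)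
    (hnn : ∀ t ∈ quasispectrum ℝ a, 0 ≤ t) {s : ℝ} (hs : 0 < s) :
    ‖cfcₙ (ff s) a - a‖ ≤ s := by
  have hf : ContinuousOn (ff s) (quasispectrum ℝ a) := (ff_cont s).continuousOn
  have hid : ContinuousOn (id : ℝ → ℝ) (quasispectrum ℝ a) := continuousOn_id
  have h1 : cfcₙ (fun t : ℝ => ff s t - t) a = cfcₙ (ff s) a - cfcₙ (id : ℝ → ℝ) a :=
    cfcₙ_sub _ _ a hf (ff_zero hs) hid rfl
  nth_rewrite 2 [← cfcₙ_id (R := ℝ) a hsa]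
  rw [← h1]
  apply norm_cfcₙ_le
  intro t ht
  rw [Real.norm_eq_abs]
  exact ff_near hs (hnn t ht)

lemma norm_gg_apply_le_one (a : A) {s : ℝ} (hs : 0 < s) : ‖cfcₙ (gg s) a‖ ≤ 1 :=
  norm_cfcₙ_le fun t _ => by rw [Real.norm_eq_abs]; exact gg_le_one hs t

lemma gg_apply_eq_zero {b : A} (hb : IsSelfAdjoint b) {s : ℝ} (hs : 0 < s)
    (hnorm : ‖b‖ < s) : cfcₙ (gg s) b = 0 := by
  have h : ∀ t ∈ quasispectrum ℝ b, gg s t = 0 := by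
    intro t ht
    have habs := abs_le_norm_of_mem hb ht
    have h1 : t - s ≤ 0 := by
      have := le_abs_self t
      linarith
    simp [gg, max_eq_right h1]
  calc cfcₙ (gg s) b = cfcₙ (0 : ℝ → ℝ) b := cfcₙ_congr fun t ht => h t ht
    _ = 0 := cfcₙ_zero ℝ b

/-- The key norm bound, proved in the unitization using the spectral order. -/
lemma norm_conj_cfc_le {x : A} (hxsa : IsSelfAdjoint x) (d : A) {s : ℝ} (hs : 0 < s) :
    ‖cfcₙ (gg s) x * d‖ ^ 2 ≤ s⁻¹ * ‖star d * cfcₙ (ff s) x * d‖ := by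
  letI : PartialOrder (Unitization ℂ A) := CStarAlgebra.spectralOrder _
  letI : StarOrderedRing (Unitization ℂ A) := CStarAlgebra.spectralOrderedRing _
  set gx : A := cfcₙ (gg s) x with hgx
  set x' : A := cfcₙ (ff s) x with hx'
  have hgxsa : IsSelfAdjoint gx := cfcₙ_predicate (gg s) x
  have hxsa' : IsSelfAdjoint ((x : Unitization ℂ A)) := hxsa.inr ℂ
  have hmap : ∀ f : ℝ → ℝ, ContinuousOn f (quasispectrum ℝ x) → f 0 = 0 →
      ((cfcₙ f x : A) : Unitization ℂ A) = cfcₙ f ((x : Unitization ℂ A)) := by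
    intro f hf h0
    exact (Unitization.inrNonUnitalStarAlgHom ℂ A).map_cfcₙ f x hf h0
      Unitization.isometry_inr.continuous hxsa hxsa'
  have hgcont : ContinuousOn (gg s) (quasispectrum ℝ x) := (gg_cont hs).continuousOn
  have hfcont : ContinuousOn (ff s) (quasispectrum ℝ x) := (ff_cont s).continuousOn
  -- the inequality gx * gx ≤ s⁻¹ • x' in the unitization
  have h1 : ((gx * gx : A) : Unitization ℂ A) ≤ ((s⁻¹ • x' : A) : Unitization ℂ A) := by
    have e1 : ((gx * gx : A) : Unitization ℂ A)
        = cfcₙ (fun t : ℝ => gg s t * gg s t) ((x : Unitization ℂ A)) := by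
      rw [Unitization.inr_mul, hgx, hmap (gg s) hgcont (gg_zero hs),
        ← cfcₙ_mul (gg s) (gg s) _ ((gg_cont hs).continuousOn) (gg_zero hs)
          ((gg_cont hs).continuousOn) (gg_zero hs)]
    have e2 : ((s⁻¹ • x' : A) : Unitization ℂ A)
        = cfcₙ (fun t : ℝ => s⁻¹ * ff s t) ((x : Unitization ℂ A)) := by
      rw [Unitization.inr_smul, hx', hmap (ff s) hfcont (ff_zero hs),
        cfcₙ_const_mul s⁻¹ (ff s) _ ((ff_cont s).continuousOn) (ff_zero hs)]
    rw [e1, e2]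
    exact cfcₙ_mono (fun t _ => gg_sq_le hs t)
      (((gg_cont hs).mul (gg_cont hs)).continuousOn)
      (((ff_cont s).const_smul s⁻¹).continuousOn)
      (by simp [gg_zero hs]) (by simp [ff_zero hs])
  -- conjugate by d
  set c₁ : A := gx * d with hc₁
  have eL : star c₁ * c₁ = star d * (gx * gx) * d := by
    rw [hc₁, star_mul, hgxsa.star_eq]
    simp only [mul_assoc]
  have eR : star d * (s⁻¹ • x') * d = s⁻¹ • (star d * x' * d) := by
    rw [mul_smul_comm, smul_mul_assoc]
  have h2 : ((star c₁ * c₁ : A) : Unitization ℂ A)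
      ≤ ((s⁻¹ • (star d * x' * d) : A) : Unitization ℂ A) := by
    rw [eL, ← eR]
    have := star_left_conjugate_le_conjugate h1 ((d : Unitization ℂ A))
    calc ((star d * (gx * gx) * d : A) : Unitization ℂ A)
        = star (d : Unitization ℂ A) * ((gx * gx : A) : Unitization ℂ A)
            * (d : Unitization ℂ A) := by
          rw [Unitization.inr_mul, Unitization.inr_mul, Unitization.inr_star]
      _ ≤ star (d : Unitization ℂ A) * ((s⁻¹ • x' : A) : Unitization ℂ A)
            * (d : Unitization ℂ A) := this
      _ = ((star d * (s⁻¹ • x') * d : A) : Unitization ℂ A) := by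
          rw [Unitization.inr_mul, Unitization.inr_mul, Unitization.inr_star]
  -- conclude via norms
  have hnn : (0 : Unitization ℂ A) ≤ ((star c₁ * c₁ : A) : Unitization ℂ A) := by
    rw [Unitization.inr_mul, Unitization.inr_star]
    exact star_mul_self_nonneg _
  have h3 := CStarAlgebra.norm_le_norm_of_nonneg_of_le hnn h2
  rw [Unitization.norm_inr, Unitization.norm_inr] at h3
  calc ‖c₁‖ ^ 2 = ‖star c₁ * c₁‖ := by rw [CStarRing.norm_star_mul_self, sq]
    _ ≤ ‖s⁻¹ • (star d * x' * d)‖ := h3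
    _ = s⁻¹ * ‖star d * x' * d‖ := by
        rw [norm_smul, Real.norm_eq_abs, abs_of_pos (by positivity)]

end Statement6Aux

open Statement6Aux

theorem statement6
    {E D : Type*} [NonUnitalCStarAlgebra E] [NonUnitalCStarAlgebra D]
    (q : E →⋆ₙₐ[ℂ] D) (hq : Function.Surjective q)
    (hPL : PurelyLarge q) :
    ∀ x y : E, (∃ c : E, x = star c * c) → q x ≠ 0 →
      q y = 0 → (∃ c : E, y = star c * c) →
      ∀ ε > (0 : ℝ), ∃ c : E, q c = 0 ∧
        ‖star c * x * c - y‖ < ε ∧ ‖c‖ ^ 2 ≤ ‖y‖ / ‖q x‖ := by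
  rintro x y ⟨u, hu⟩ hqx hqy ⟨v, hv⟩ ε hε
  have hxsa : IsSelfAdjoint x := hu ▸ IsSelfAdjoint.star_mul_self u
  have hxnn : ∀ t ∈ quasispectrum ℝ x, 0 ≤ t := hu ▸ qsp_star_mul_self_nonneg u
  set N : ℝ := ‖q x‖ with hNdef
  have hN : 0 < N := norm_pos_iff.mpr hqx
  by_cases hyz : y = 0
  · refine ⟨0, map_zero q, ?_, ?_⟩
    · simpa [hyz] using hε
    · simp only [hyz, norm_zero, zero_div, norm_zero]
      norm_num
  -- main case
  have hM : 0 < ‖y‖ := norm_pos_iff.mpr hyz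
  set M : ℝ := ‖y‖ with hMdef
  -- parameters
  set r : ℝ := min (ε / (2 * M)) (1 / 2) with hrdef
  have hr : 0 < r := lt_min (by positivity) (by norm_num)
  have hrM : r * M ≤ ε / 2 := by
    have h : r ≤ ε / (2 * M) := min_le_left _ _
    calc r * M ≤ (ε / (2 * M)) * M := by nlinarith
      _ = ε / 2 := by field_simp
  set θ : ℝ := 1 - r with hθdef
  have hθ0 : 0 < θ := by
    have : r ≤ 1 / 2 := min_le_right _ _
    simp only [hθdef]; linarith
  set ε₁ : ℝ := min (ε / 8) (r * M / 2) with hε₁def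
  have hε₁ : 0 < ε₁ := lt_min (by linarith) (by positivity)
  have hε₁a : ε₁ ≤ ε / 8 := min_le_left _ _
  have hε₁b : ε₁ ≤ r * M / 2 := min_le_right _ _
  set ε₀ : ℝ := ε / 4 with hε₀def
  have hε₀ : 0 < ε₀ := by positivity
  have hε₁ε₀ : ε₁ < ε₀ := lt_of_le_of_lt hε₁a (by simp only [hε₀def]; linarith)
  set δ : ℝ := min (N / 2) (N * (r * M - ε₁) / (2 * M)) with hδdef
  have hrMε₁ : r * M / 2 ≤ r * M - ε₁ := by linarith
  have hδ0 : 0 < δ := by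
    apply lt_min (by positivity)
    have h1 : 0 < r * M - ε₁ := lt_of_lt_of_le (by positivity) hrMε₁
    positivity
  have hδha : δ ≤ N / 2 := min_le_left _ _
  set s : ℝ := N - δ with hsdef
  have hs : 0 < s := by simp only [hsdef]; linarith
  clear_value N M r θ ε₁ ε₀ δ s
  -- the truncation x' of x
  set x' : E := cfcₙ (ff s) x with hx'def
  have hqxsa : IsSelfAdjoint (q x) := by
    rw [hu, map_mul, map_star]
    exact IsSelfAdjoint.star_mul_self (q u)
  have hqxnn : ∀ t ∈ quasispectrum ℝ (q x), 0 ≤ t := by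
    rw [hu, map_mul, map_star]
    exact qsp_star_mul_self_nonneg (q u)
  have hqx' : q x' = cfcₙ (ff s) (q x) :=
    q.map_cfcₙ (ff s) x (ff_cont s).continuousOn (ff_zero hs) (map_continuous q) hxsa hqxsa
  have hqx'ne : q x' ≠ 0 := by
    rw [hqx']
    intro hzero
    have hmem : N ∈ quasispectrum ℝ (q x) := by rw [hNdef]; exact norm_mem_quasispectrum hqxsa hqxnn
    have hle := norm_apply_le_norm_cfcₙ (ff s) (q x) hmem (ff_cont s).continuousOn
      (ff_zero hs) hqxsa
    rw [hzero, norm_zero, Real.norm_eq_abs] at hle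
    have hffN : ff s N = δ := by
      rw [ff, max_eq_left (by simp only [hsdef]; linarith)]
      simp only [hsdef]; ring
    rw [hffN, abs_of_pos hδ0] at hle
    linarith
  -- the scaled target y'
  set y' : E := (θ : ℂ) • y with hy'def
  have hqy' : q y' = 0 := by rw [hy'def, map_smul, hqy, smul_zero]
  have hy'sq : ∃ c : E, y' = star c * c := by
    refine ⟨(Real.sqrt θ : ℂ) • v, ?_⟩
    rw [star_smul, smul_mul_smul_comm, ← hv]
    rw [Complex.star_def, Complex.conj_ofReal, ← Complex.ofReal_mul,
      Real.mul_self_sqrt hθ0.le]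
  have hx'sq : ∃ c : E, x' = star c * c :=
    cfc_exists_star_mul_self (ff s) (ff_cont s) (ff_zero hs) (ff_nonneg s) x
  obtain ⟨d, hd⟩ := hPL y' x' hqy' hy'sq hx'sq hqx'ne ε₁ hε₁
  -- construct c₁
  set gx : E := cfcₙ (gg s) x with hgxdef
  have hgxsa : IsSelfAdjoint gx := cfcₙ_predicate (gg s) x
  set c₁ : E := gx * d with hc₁def
  have key1 : star c₁ * x * c₁ = star d * x' * d := by
    rw [hc₁def, star_mul, hgxsa.star_eq]
    calc star d * gx * x * (gx * d) = star d * (gx * x * gx) * d := by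
          simp only [mul_assoc]
      _ = star d * x' * d := by rw [hx'def, hgxdef, cut x hxsa hs]
  set a : E := star c₁ * x * c₁ with hadef
  have ha_near : ‖a - y'‖ < ε₁ := by rw [key1]; exact hd
  have ha_decomp : a = star (u * c₁) * (u * c₁) := by
    rw [hadef, hu, show star (u * c₁) = star c₁ * star u from star_mul u c₁]
    simp only [mul_assoc]
  have hasa : IsSelfAdjoint a := ha_decomp ▸ IsSelfAdjoint.star_mul_self (u * c₁)
  have hann : ∀ t ∈ quasispectrum ℝ a, 0 ≤ t :=
    ha_decomp ▸ qsp_star_mul_self_nonneg (u * c₁)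
  -- norm bound on c₁
  have hnormy' : ‖y'‖ = θ * M := by
    rw [hy'def, norm_smul, Complex.norm_real, Real.norm_eq_abs, abs_of_pos hθ0, hMdef]
  have hnorma : ‖a‖ ≤ θ * M + ε₁ := by
    calc ‖a‖ = ‖(a - y') + y'‖ := by congr 1; abel
      _ ≤ ‖a - y'‖ + ‖y'‖ := norm_add_le _ _
      _ ≤ ε₁ + θ * M := by rw [hnormy']; linarith
      _ = θ * M + ε₁ := by ring
  have hnormc₁ : ‖c₁‖ ^ 2 ≤ s⁻¹ * (θ * M + ε₁) := by
    have h1 := norm_conj_cfc_le hxsa d hs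
    rw [← hgxdef, ← hx'def, ← hc₁def, ← key1] at h1
    calc ‖c₁‖ ^ 2 ≤ s⁻¹ * ‖a‖ := h1
      _ ≤ s⁻¹ * (θ * M + ε₁) := by
          apply mul_le_mul_of_nonneg_left hnorma (by positivity)
  -- final element c
  set ga : E := cfcₙ (gg ε₀) a with hgadef
  have hgasa : IsSelfAdjoint ga := cfcₙ_predicate (gg ε₀) a
  set c : E := c₁ * ga with hcdef
  refine ⟨c, ?_, ?_, ?_⟩
  · -- q c = 0
    have hqa0 : IsSelfAdjoint (q a) := hasa.map q
    have hqga : q ga = cfcₙ (gg ε₀) (q a) :=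
      q.map_cfcₙ (gg ε₀) a (gg_cont hε₀).continuousOn (gg_zero hε₀) (map_continuous q)
        hasa hqa0
    have hqanorm : ‖q a‖ < ε₀ := by
      have h1 : q a = q (a - y') := by rw [map_sub, hqy', sub_zero]
      rw [h1]
      calc ‖q (a - y')‖ ≤ ‖a - y'‖ := NonUnitalStarAlgHom.norm_apply_le q _
        _ < ε₁ := ha_near
        _ < ε₀ := hε₁ε₀
    have hz : cfcₙ (gg ε₀) (q a) = 0 := gg_apply_eq_zero hqa0 hε₀ hqanorm
    rw [hcdef, map_mul, hqga, hz, mul_zero]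
  · -- norm estimate
    have key2 : star c * x * c = cfcₙ (ff ε₀) a := by
      rw [hcdef, star_mul, hgasa.star_eq]
      calc ga * star c₁ * x * (c₁ * ga) = ga * (star c₁ * x * c₁) * ga := by
            simp only [mul_assoc]
        _ = ga * a * ga := by rw [← hadef]
        _ = cfcₙ (ff ε₀) a := by rw [hgadef, cut a hasa hε₀]
    rw [key2]
    have h1 : ‖cfcₙ (ff ε₀) a - a‖ ≤ ε₀ := cut_near a hasa hann hε₀
    have h2 : ‖y' - y‖ = r * M := by
      have e1 : y' - y = ((θ : ℂ) - 1) • y := by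
        rw [sub_smul, one_smul, hy'def]
      rw [e1, norm_smul]
      have e2 : ((θ : ℂ) - 1) = ((θ - 1 : ℝ) : ℂ) := by push_cast; ring
      rw [e2, Complex.norm_real, Real.norm_eq_abs, hθdef]
      rw [show (1 : ℝ) - r - 1 = -r by ring, abs_neg, abs_of_pos hr, hMdef]
    calc ‖cfcₙ (ff ε₀) a - y‖
        = ‖(cfcₙ (ff ε₀) a - a) + (a - y') + (y' - y)‖ := by congr 1; abel
      _ ≤ ‖(cfcₙ (ff ε₀) a - a) + (a - y')‖ + ‖y' - y‖ := norm_add_le _ _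
      _ ≤ ‖cfcₙ (ff ε₀) a - a‖ + ‖a - y'‖ + ‖y' - y‖ := by
          have := norm_add_le (cfcₙ (ff ε₀) a - a) (a - y')
          linarith
      _ < ε₀ + ε₁ + r * M := by
          have := h2
          linarith
      _ ≤ ε / 4 + ε / 8 + ε / 2 := by
          simp only [hε₀def]
          linarith
      _ < ε := by linarith
  · -- norm bound
    have hga1 : ‖ga‖ ≤ 1 := norm_gg_apply_le_one a hε₀
    have hcle : ‖c‖ ≤ ‖c₁‖ := by
      calc ‖c‖ ≤ ‖c₁‖ * ‖ga‖ := norm_mul_le _ _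
        _ ≤ ‖c₁‖ * 1 := mul_le_mul_of_nonneg_left hga1 (norm_nonneg _)
        _ = ‖c₁‖ := mul_one _
    have hcsq : ‖c‖ ^ 2 ≤ ‖c₁‖ ^ 2 := by
      apply pow_le_pow_left₀ (norm_nonneg c) hcle
    have harith : s⁻¹ * (θ * M + ε₁) ≤ M / N := by
      have hδb : δ ≤ N * (r * M - ε₁) / (2 * M) := by rw [hδdef]; exact min_le_right _ _
      have hMδ : M * δ ≤ N * (r * M - ε₁) / 2 := by
        calc M * δ ≤ M * (N * (r * M - ε₁) / (2 * M)) := by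
              apply mul_le_mul_of_nonneg_left hδb hM.le
          _ = N * (r * M - ε₁) / 2 := by field_simp
      have hrMε₁' : 0 < r * M - ε₁ := lt_of_lt_of_le (by positivity) hrMε₁
      rw [inv_mul_eq_div, div_le_div_iff₀ hs hN]
      have hθM : θ * M = M - r * M := by rw [hθdef]; ring
      have hkey : (θ * M + ε₁) * N = M * N - (r * M - ε₁) * N := by rw [hθM]; ring
      have hMs : M * s = M * N - M * δ := by rw [hsdef]; ring
      have h3 : M * δ ≤ (r * M - ε₁) * N := by
        refine hMδ.trans ?_
        have hpos : 0 ≤ (r * M - ε₁) * N := mul_nonneg hrMε₁'.le hN.le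
        linarith
      linarith
    calc ‖c‖ ^ 2 ≤ ‖c₁‖ ^ 2 := hcsq
      _ ≤ s⁻¹ * (θ * M + ε₁) := hnormc₁
      _ ≤ M / N := harith
end
end

section
/- Let 0 → I → E → D → 0 be an extension of C*-algebras with I nonzero. If the extension is purely large, then I is an essential ideal of E (i.e. any y ∈ E with yI = Iy = 0 satisfies y = 0). Conversely, if I is simple, purely infinite and essential in E, then the extension is purely large. -/
/-!
STATEMENT 7: For an extension `0 → I → E → D → 0` with `I = ker q` nonzero: if the extension
is purely large then `I` is essential in `E`; conversely, if `I` is simple, purely infinite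
and essential in `E`, then the extension is purely large.

"Simple and purely infinite" is encoded by the Kirchberg–Rørdam characterization, relativized
to the subset `I`: `I` is nonzero, not one-dimensional, and every positive element of `I` is
Cuntz subequivalent (within `I`) to every nonzero positive element of `I`.
-/

noncomputable section

/-- A subset `C` of a C*-algebra is simple and purely infinite (as a C*-algebra), via the
Kirchberg–Rørdam characterization: `C` is nonzero, not one-dimensional (i.e. not isomorphic
to `ℂ`), and for all positive `x, y ∈ C` with `x ≠ 0`, `y` is Cuntz subequivalent to `x`
within `C`. -/
def IsSimplePurelyInfiniteSet {E : Type*} [NonUnitalCStarAlgebra E] (C : Set E) : Prop :=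
  (∃ y ∈ C, y ≠ 0) ∧
  (¬ ∃ e : E, C = {x : E | ∃ c : ℂ, x = c • e}) ∧
  (∀ x ∈ C, ∀ y ∈ C, (∃ c : E, x = star c * c) → (∃ c : E, y = star c * c) → x ≠ 0 →
    ∀ ε > (0 : ℝ), ∃ c ∈ C, ‖star c * x * c - y‖ < ε)

/-- A selfadjoint element whose square is zero is zero. -/
lemma aux_sq_zero {D : Type*} [NonUnitalCStarAlgebra D] {d : D} (hd : star d = d)
    (h : d * d = 0) : d = 0 := by
  have h1 : ‖d‖ * ‖d‖ = 0 := by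
    rw [← CStarRing.norm_star_mul_self (x := d), hd, h, norm_zero]
  have : ‖d‖ = 0 := by nlinarith [norm_nonneg d]
  exact norm_eq_zero.mp this

/-- An element with `star c * c = 0` is zero. -/
lemma aux_star_mul_self_zero {D : Type*} [NonUnitalCStarAlgebra D] {c : D}
    (h : star c * c = 0) : c = 0 := by
  have h1 : ‖c‖ * ‖c‖ = 0 := by rw [← CStarRing.norm_star_mul_self (x := c), h, norm_zero]
  have : ‖c‖ = 0 := by nlinarith [norm_nonneg c]
  exact norm_eq_zero.mp this

/-- For a selfadjoint element `a`, `‖a‖ ^ 3 ≤ ‖a * a * a‖`. -/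
lemma aux_norm_cube {E : Type*} [NonUnitalCStarAlgebra E] {a : E} (ha : star a = a) :
    ‖a‖ ^ 3 ≤ ‖a * a * a‖ := by
  have h2 : ‖a * a‖ = ‖a‖ * ‖a‖ := by
    nth_rewrite 1 [← ha]; exact CStarRing.norm_star_mul_self
  have haa : star (a * a) = a * a := by rw [star_mul, ha]
  have h4 : ‖a * a * (a * a)‖ = ‖a‖ * ‖a‖ * (‖a‖ * ‖a‖) := by
    nth_rewrite 1 [← haa]; rw [CStarRing.norm_star_mul_self, h2]
  have h5 : a * a * (a * a) = a * a * a * a := by simp only [mul_assoc]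
  have h6 : ‖a * a * a * a‖ ≤ ‖a * a * a‖ * ‖a‖ := norm_mul_le _ _
  rw [← h5, h4] at h6
  rcases eq_or_lt_of_le (norm_nonneg a) with h | h
  · rw [← h]; simpa using norm_nonneg (a * a * a)
  · nlinarith [norm_nonneg (a * a * a)]

theorem statement7
    {E D : Type*} [NonUnitalCStarAlgebra E] [NonUnitalCStarAlgebra D]
    (q : E →⋆ₙₐ[ℂ] D) (hq : Function.Surjective q)
    (hInonzero : ∃ y : E, q y = 0 ∧ y ≠ 0) :
    -- purely large implies `I` essential in `E`
    (PurelyLarge q →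
      ∀ y : E, (∀ z : E, q z = 0 → y * z = 0 ∧ z * y = 0) → y = 0) ∧
    -- if `I` is simple, purely infinite and essential, then the extension is purely large
    (IsSimplePurelyInfiniteSet {x : E | q x = 0} →
      (∀ y : E, (∀ z : E, q z = 0 → y * z = 0 ∧ z * y = 0) → y = 0) →
      PurelyLarge q) := by
  constructor
  · -- purely large → essential
    intro hPL y hy
    -- `x := star y * y` also annihilates the ideal
    have hann : ∀ z : E, q z = 0 → (star y * y) * z = 0 ∧ z * (star y * y) = 0 := by
      intro z hz
      have h1 : y * z = 0 := (hy z hz).1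
      have h2 : y * star z = 0 := (hy (star z) (by rw [map_star, hz, star_zero])).1
      have h3 : z * star y = 0 := by
        have := congrArg star h2
        rwa [star_mul, star_star, star_zero] at this
      exact ⟨by rw [mul_assoc, h1, mul_zero], by rw [← mul_assoc, h3, zero_mul]⟩
    by_cases hx : q (star y * y) = 0
    · have h0 : (star y * y) * (star y * y) = 0 := (hann _ hx).1
      have h1 : star y * y = 0 := aux_sq_zero (by rw [star_mul, star_star]) h0
      exact aux_star_mul_self_zero h1
    · exfalso
      obtain ⟨z, hz, hzne⟩ := hInonzero
      set y₀ : E := star z * z with hy₀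
      have hy₀star : star y₀ = y₀ := by rw [hy₀, star_mul, star_star]
      have hy₀q : q y₀ = 0 := by rw [hy₀, map_mul, hz, mul_zero]
      have hn : 0 < ‖y₀‖ := by
        rw [hy₀, CStarRing.norm_star_mul_self]
        have : 0 < ‖z‖ := norm_pos_iff.mpr hzne
        positivity
      set n : ℝ := ‖y₀‖ with hn_def
      set ε : ℝ := n ^ 3 / (n ^ 2 + 1) with hε_def
      have hε : 0 < ε := by positivity
      obtain ⟨c, hc⟩ := hPL y₀ (star y * y) hy₀q ⟨z, hy₀⟩ ⟨y, rfl⟩ hx ε hε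
      have hcy₀ : q (c * y₀) = 0 := by rw [map_mul, hy₀q, mul_zero]
      have hX : (star y * y) * (c * y₀) = 0 := (hann _ hcy₀).1
      have key : y₀ * (star c * (star y * y) * c) * y₀ = 0 := by
        calc y₀ * (star c * (star y * y) * c) * y₀
            = y₀ * (star c * ((star y * y) * (c * y₀))) := by simp only [mul_assoc]
          _ = 0 := by rw [hX, mul_zero, mul_zero]
      have hcube : y₀ * y₀ * y₀ = y₀ * (y₀ - star c * (star y * y) * c) * y₀ := by
        rw [mul_sub, sub_mul, key, sub_zero]
      have hsub : ‖y₀ - star c * (star y * y) * c‖ < ε := by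
        rw [norm_sub_rev]; exact hc
      have h3 : n ^ 3 ≤ ‖y₀ * y₀ * y₀‖ := aux_norm_cube hy₀star
      have hlt : n ^ 3 < n * ε * n := by
        calc n ^ 3 ≤ ‖y₀ * y₀ * y₀‖ := h3
          _ = ‖y₀ * (y₀ - star c * (star y * y) * c) * y₀‖ := by rw [← hcube]
          _ ≤ ‖y₀ * (y₀ - star c * (star y * y) * c)‖ * ‖y₀‖ := norm_mul_le _ _
          _ ≤ ‖y₀‖ * ‖y₀ - star c * (star y * y) * c‖ * ‖y₀‖ := by
              exact mul_le_mul_of_nonneg_right (norm_mul_le _ _) (norm_nonneg _)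
          _ < n * ε * n := by
              apply mul_lt_mul_of_pos_right _ hn
              exact mul_lt_mul_of_pos_left hsub hn
      have key2 : ε * (n ^ 2 + 1) = n ^ 3 := div_mul_cancel₀ _ (by positivity)
      nlinarith [hlt, key2, hε]
  · -- converse
    intro hSPI hEss y x hyq hyform hxform hxq ε hε
    obtain ⟨cy, hcy⟩ := hyform
    obtain ⟨cx, hcx⟩ := hxform
    have hxstar : star x = x := by rw [hcx, star_mul, star_star]
    -- find z in the ideal with star z * x * z ≠ 0
    have hxz : (∀ z : E, q z = 0 → star z * x * z = 0) → ∀ z : E, q z = 0 → x * z = 0 := by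
      intro h z hz
      have h1 : star z * x * z = 0 := h z hz
      have h2 : cx * z = 0 := by
        apply aux_star_mul_self_zero
        calc star (cx * z) * (cx * z) = star z * (star cx * cx) * z := by
              rw [star_mul]; simp only [mul_assoc]
          _ = 0 := by rw [← hcx]; exact h1
      calc x * z = star cx * (cx * z) := by rw [hcx, mul_assoc]
        _ = 0 := by rw [h2, mul_zero]
    have hexz : ∃ z : E, q z = 0 ∧ star z * x * z ≠ 0 := by
      by_contra h
      push_neg at h
      apply hxq
      have hx0 : x = 0 := by
        apply hEss x
        intro z hz
        have hA : x * z = 0 := hxz h z hz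
        have hB : x * star z = 0 := hxz h (star z) (by rw [map_star, hz, star_zero])
        have hC : z * x = 0 := by
          have := congrArg star hB
          rwa [star_mul, star_star, hxstar, star_zero] at this
        exact ⟨hA, hC⟩
      rw [hx0, map_zero]
    obtain ⟨z, hzq, hbne⟩ := hexz
    set b : E := star z * x * z with hb
    have hbq : b ∈ {x : E | q x = 0} := by
      show q b = 0
      rw [hb, map_mul, hzq, mul_zero]
    have hymem : y ∈ {x : E | q x = 0} := hyq
    have hbform : ∃ c : E, b = star c * c := by
      refine ⟨cx * z, ?_⟩
      rw [star_mul, hb, hcx]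
      simp only [mul_assoc]
    obtain ⟨c₂, hc₂mem, hc₂⟩ := hSPI.2.2 b hbq y hymem hbform ⟨cy, hcy⟩ hbne ε hε
    refine ⟨z * c₂, ?_⟩
    have heq : star (z * c₂) * x * (z * c₂) = star c₂ * b * c₂ := by
      rw [star_mul, hb]
      simp only [mul_assoc]
    rw [heq]
    exact hc₂
end
end

section
/- Let A be a C*-algebra and let 0 → I → E → D → 0 be a purely large extension of C*-algebras (q : E → D the surjective *-homomorphism with kernel I). Then for any injective *-homomorphism φ : A → D, the pull-back extension 0 → I → E_φ → A → 0 is purely large, where E_φ := {(x, a) ∈ E ⊕ A : q(x) = φ(a)}, the ideal I is included via y ↦ (y, 0), and the quotient map is the coordinate projection (x, a) ↦ a. -/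
/-!
STATEMENT 8: The pull-back of a purely large extension `0 → I → E → D → 0` along an injective
*-homomorphism `φ : A → D` is purely large.  The pull-back algebra is
`E_φ = {(x, a) ∈ E ⊕ A : q(x) = φ(a)}` with ideal `ι(I) = {(y, 0) : y ∈ I}` (a subset of the
product C*-algebra `E × A`, which carries the sup norm), and quotient map `(x, a) ↦ a`.
-/

noncomputable section

open scoped CStarAlgebra

set_option maxHeartbeats 1000000 in
theorem statement8
    {A E D : Type*} [NonUnitalCStarAlgebra A] [NonUnitalCStarAlgebra E]
    [NonUnitalCStarAlgebra D]
    (q : E →⋆ₙₐ[ℂ] D) (hq : Function.Surjective q)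
    (hPL : PurelyLarge q)
    (φ : A →⋆ₙₐ[ℂ] D) (hφ : Function.Injective φ) :
    -- the pull-back extension `0 → I → E_φ → A → 0` is purely large:
    let Eφ : Set (E × A) := {p | q p.1 = φ p.2}
    let Iφ : Set (E × A) := {p | q p.1 = 0 ∧ p.2 = 0}
    ∀ y ∈ Iφ, (∃ c : E × A, y = star c * c) →
      ∀ x ∈ Eφ, (∃ c : E × A, x = star c * c) → x ∉ Iφ →
        ∀ ε > (0 : ℝ), ∃ c ∈ Eφ, ‖star c * x * c - y‖ < ε := by
  intro Eφ Iφ y hy hypos x hx hxpos hxI ε hε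
  simp only [Eφ, Iφ, Set.mem_setOf_eq] at hy hx hxI
  obtain ⟨hy1, hy2⟩ := hy
  obtain ⟨cy, hcy⟩ := hypos
  obtain ⟨cx, hcx⟩ := hxpos
  have hqx : q x.1 ≠ 0 := by
    intro h
    refine hxI ⟨h, hφ ?_⟩
    rw [← hx, h, map_zero]
  have hy1' : y.1 = star cy.1 * cy.1 := by rw [hcy]; rfl
  have hx1' : x.1 = star cx.1 * cx.1 := by rw [hcx]; rfl
  have hy1sa : IsSelfAdjoint y.1 := hy1' ▸ IsSelfAdjoint.star_mul_self cy.1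
  obtain ⟨c, hc⟩ := hPL y.1 x.1 hy1 ⟨cy.1, hy1'⟩ ⟨cx.1, hx1'⟩ hqx (ε/2) (by linarith)
  set g : ℝ → ℝ := fun t => min (|t| / (ε/2)) 1 with hg_def
  have hgc : Continuous g := (continuous_abs.div_const _).min continuous_const
  have hg0 : g 0 = 0 := by simp [hg_def]
  have hgbd : ∀ t : ℝ, 0 ≤ g t ∧ g t ≤ 1 := fun t =>
    ⟨le_min (by positivity) zero_le_one, min_le_right _ _⟩
  set e : E := cfcₙ g y.1 with he_def
  have he_sa : IsSelfAdjoint e := cfcₙ_predicate g y.1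
  have he_norm : ‖e‖ ≤ 1 := by
    apply norm_cfcₙ_le
    intro t _
    rw [Real.norm_eq_abs, abs_le]
    exact ⟨le_trans (by norm_num) (hgbd t).1, (hgbd t).2⟩
  have key : ‖e * y.1 * e - y.1‖ ≤ ε/2 := by
    have h1 : e * y.1 * e = cfcₙ (fun t => g t * t * g t) y.1 := by
      rw [cfcₙ_mul (fun t => g t * t) g y.1
          ((hgc.continuousOn).mul (continuousOn_id)) (by simp [hg0])
          hgc.continuousOn hg0,
        cfcₙ_mul g (fun t : ℝ => t) y.1 hgc.continuousOn hg0 continuousOn_id rfl,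
        cfcₙ_id' ℝ y.1]
    have h2 : e * y.1 * e - y.1 = cfcₙ (fun t => g t * t * g t - t) y.1 := by
      rw [cfcₙ_sub (fun t => g t * t * g t) (fun t : ℝ => t) y.1
          (((hgc.continuousOn).mul continuousOn_id).mul hgc.continuousOn) (by simp [hg0])
          continuousOn_id rfl,
        h1, cfcₙ_id' ℝ y.1]
    rw [h2]
    apply norm_cfcₙ_le
    intro t _
    obtain ⟨hg1, hg2⟩ := hgbd t
    rw [Real.norm_eq_abs]
    rcases le_or_gt |t| (ε/2) with h | h
    · have : g t * t * g t - t = t * (g t * g t - 1) := by ring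
      rw [this, abs_mul]
      have habs : |g t * g t - 1| ≤ 1 := by rw [abs_le]; constructor <;> nlinarith
      calc |t| * |g t * g t - 1| ≤ |t| * 1 := by gcongr
        _ ≤ ε/2 := by rwa [mul_one]
    · have hg1' : g t = 1 := by
        rw [hg_def]
        simp only
        rw [min_eq_right]
        rw [le_div_iff₀ (by linarith)]
        linarith
      rw [hg1']
      simpa using by linarith
  have hqe : q e = 0 := by
    have hmap : q e = cfcₙ g (q y.1) :=
      q.map_cfcₙ g y.1 hgc.continuousOn hg0 (map_continuous q) hy1sa
        (by rw [hy1]; exact IsSelfAdjoint.zero D)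
    rw [hmap, hy1]
    have hσ : quasispectrum ℝ (0:D) = {0} := by
      rw [Unitization.quasispectrum_eq_spectrum_inr' ℝ ℂ, Unitization.inr_zero, spectrum.zero_eq]
    have h0 : cfcₙ g (0:D) = cfcₙ (fun _ : ℝ => (0:ℝ)) (0:D) := by
      apply cfcₙ_congr
      rw [hσ]
      intro t ht
      simp only [Set.mem_singleton_iff] at ht
      simp [ht, hg0]
    rw [h0]
    exact cfcₙ_zero ℝ (0:D)
  refine ⟨(c * e, 0), ?_, ?_⟩
  · show q (c * e) = φ 0
    rw [map_mul, hqe, mul_zero, map_zero]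
  · have hfst : (star ((c*e), (0:A)) * x * ((c*e), (0:A)) - y).1
        = e * (star c * x.1 * c - y.1) * e + (e * y.1 * e - y.1) := by
      show star (c * e) * x.1 * (c * e) - y.1 = _
      rw [star_mul, he_sa.star_eq]
      noncomm_ring
    have hsnd : (star ((c*e), (0:A)) * x * ((c*e), (0:A)) - y).2 = 0 := by
      show star (0:A) * x.2 * 0 - y.2 = 0
      rw [hy2, mul_zero, sub_zero]
    rw [Prod.norm_def, hfst, hsnd, norm_zero]
    have h1 : ‖e * (star c * x.1 * c - y.1) * e‖ < ε/2 := by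
      calc ‖e * (star c * x.1 * c - y.1) * e‖
          ≤ ‖e * (star c * x.1 * c - y.1)‖ * ‖e‖ := norm_mul_le _ _
        _ ≤ ‖e‖ * ‖star c * x.1 * c - y.1‖ * ‖e‖ := by
            gcongr; exact norm_mul_le _ _
        _ ≤ 1 * ‖star c * x.1 * c - y.1‖ * 1 := by gcongr
        _ = ‖star c * x.1 * c - y.1‖ := by ring
        _ < ε/2 := hc
    have h2 := norm_add_le (e * (star c * x.1 * c - y.1) * e) (e * y.1 * e - y.1)
    have hmax : ‖e * (star c * x.1 * c - y.1) * e + (e * y.1 * e - y.1)‖ < ε := by linarith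
    exact max_lt hmax hε
end
end

section
/- Let 0 → I → E → D → 0 be a purely large extension of C*-algebras (q : E → D surjective with kernel I), and let I₀ ⊆ I, E₀ ⊆ E, D₀ ⊆ D be separable C*-subalgebras. Then there exist separable C*-subalgebras I_s ⊆ I, E_s ⊆ E, D_s ⊆ D such that: (a) E₀ ⊆ E_s; (b) I₀ ⊆ I_s and I_s = E_s ∩ I; (c) D₀ ⊆ D_s and D_s = C*(q(E₀) ∪ D₀), with q(E_s) = D_s, so that 0 → I_s → E_s → D_s → 0 (with the restrictions of the inclusion and of q) is an extension; (d) the extension 0 → I_s → E_s → D_s → 0 is purely large; (e) if moreover I is simple and purely infinite, then I_s can additionally be chosen simple and purely infinite. In particular, if q(E₀) = D₀ then D_s = D₀, and if E is unital one may arrange 1_E ∈ E_s. -/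
/-!
STATEMENT 12: Separabilization of purely large extensions.  Given a purely large extension
`0 → I → E → D → 0` (with `I = ker q`) and separable C*-subalgebras `I₀ ⊆ I`, `E₀ ⊆ E`,
`D₀ ⊆ D`, there exist separable C*-subalgebras `I_s ⊆ I`, `E_s ⊆ E`, `D_s ⊆ D` with
(a) `E₀ ⊆ E_s`; (b) `I₀ ⊆ I_s = E_s ∩ I`; (c) `D₀ ⊆ D_s = C*(q(E₀) ∪ D₀)` and
`q(E_s) = D_s`; (d) the subextension `0 → I_s → E_s → D_s → 0` is purely large;
(e) if `I` is simple and purely infinite, so is `I_s`.  In particular, if `q(E₀) = D₀`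
then `D_s = D₀`, and if `E` has a unit belonging to `E₀` then it belongs to `E_s`.
-/

noncomputable section

section AuxiliaryLemmas

open TopologicalSpace Set in
theorem isSeparable_adjoin' {A : Type*} [NonUnitalCStarAlgebra A] {S : Set A}
    (hS : TopologicalSpace.IsSeparable S) :
    TopologicalSpace.IsSeparable
      ((NonUnitalStarAlgebra.adjoin ℂ S : NonUnitalStarSubalgebra ℂ A) : Set A) := by
  obtain ⟨T, hTc, hST⟩ := hS
  obtain ⟨Q, hQc, hQd⟩ := TopologicalSpace.exists_countable_dense ℂ
  let step : Set A → Set A := fun V =>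
    V ∪ Set.image2 (· + ·) V V ∪ Set.image2 (· * ·) V V ∪ (star '' V) ∪ Set.image2 (· • ·) Q V
  let Wf : ℕ → Set A := fun n => Nat.rec (T ∪ {0}) (fun _ V => step V) n
  have hWsucc : ∀ n, Wf (n + 1) = step (Wf n) := fun _ => rfl
  have hWc : ∀ n, (Wf n).Countable := by
    intro n
    induction n with
    | zero => exact hTc.union (Set.countable_singleton 0)
    | succ n ih =>
      rw [hWsucc]
      exact ((((ih.union (ih.image2 ih _)).union (ih.image2 ih _)).union (ih.image _)).union
        (hQc.image2 ih _))
  have hWstep : ∀ n, Wf n ⊆ Wf (n + 1) := by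
    intro n
    rw [hWsucc]
    exact (((Set.subset_union_left.trans Set.subset_union_left).trans
      Set.subset_union_left).trans Set.subset_union_left)
  have hWmono : ∀ {m n : ℕ}, m ≤ n → Wf m ⊆ Wf n := by
    intro m n h
    induction h with
    | refl => exact subset_rfl
    | step _ ih => exact ih.trans (hWstep _)
  set WU : Set A := ⋃ n, Wf n with hWU
  have hWUc : WU.Countable := countable_iUnion hWc
  have hmem : ∀ {x : A}, x ∈ WU ↔ ∃ n, x ∈ Wf n := by
    intro x; simp [hWU, Set.mem_iUnion]
  have hadd : ∀ x ∈ WU, ∀ y ∈ WU, x + y ∈ WU := by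
    intro x hx y hy
    obtain ⟨m, hm⟩ := hmem.1 hx; obtain ⟨n, hn⟩ := hmem.1 hy
    refine hmem.2 ⟨max m n + 1, ?_⟩
    rw [hWsucc]
    exact Set.mem_union_left _ <| Set.mem_union_left _ <| Set.mem_union_left _ <|
      Set.mem_union_right _ <|
        Set.mem_image2_of_mem (hWmono (le_max_left m n) hm) (hWmono (le_max_right m n) hn)
  have hmul : ∀ x ∈ WU, ∀ y ∈ WU, x * y ∈ WU := by
    intro x hx y hy
    obtain ⟨m, hm⟩ := hmem.1 hx; obtain ⟨n, hn⟩ := hmem.1 hy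
    refine hmem.2 ⟨max m n + 1, ?_⟩
    rw [hWsucc]
    exact Set.mem_union_left _ <| Set.mem_union_left _ <| Set.mem_union_right _ <|
      Set.mem_image2_of_mem (hWmono (le_max_left m n) hm) (hWmono (le_max_right m n) hn)
  have hstar : ∀ x ∈ WU, star x ∈ WU := by
    intro x hx
    obtain ⟨m, hm⟩ := hmem.1 hx
    refine hmem.2 ⟨m + 1, ?_⟩
    rw [hWsucc]
    exact Set.mem_union_left _ <| Set.mem_union_right _ ⟨x, hm, rfl⟩
  have hsmul : ∀ c ∈ Q, ∀ x ∈ WU, c • x ∈ WU := by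
    intro c hc x hx
    obtain ⟨m, hm⟩ := hmem.1 hx
    refine hmem.2 ⟨m + 1, ?_⟩
    rw [hWsucc]
    exact Set.mem_union_right _ <| Set.mem_image2_of_mem hc hm
  refine ⟨WU, hWUc, ?_⟩
  intro x hx
  induction hx using NonUnitalStarAlgebra.adjoin_induction with
  | mem z hz =>
      exact closure_mono (fun t ht => hmem.2 ⟨0, Set.mem_union_left _ ht⟩) (hST hz)
  | add z w _ _ hz hw => exact map_mem_closure₂ continuous_add hz hw hadd
  | zero => exact subset_closure (hmem.2 ⟨0, Set.mem_union_right _ rfl⟩)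
  | mul z w _ _ hz hw => exact map_mem_closure₂ continuous_mul hz hw hmul
  | smul c z _ hz =>
      have hc : c ∈ closure Q := by rw [hQd.closure_eq]; trivial
      exact map_mem_closure₂ continuous_smul hc hz hsmul
  | star z _ hz => exact map_mem_closure continuous_star hz hstar

theorem transfer_norm' {E : Type*} [NonUnitalCStarAlgebra E] (c x a y b : E) :
    ‖star c * x * c - y‖ ≤ ‖star c * a * c - b‖ + ‖c‖ * ‖c‖ * ‖x - a‖ + ‖y - b‖ := by
  have hid : star c * x * c - y = (star c * a * c - b) + (star c * (x - a) * c) + (b - y) := by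
    noncomm_ring
  have h1 : ‖star c * (x - a) * c‖ ≤ ‖c‖ * ‖c‖ * ‖x - a‖ := by
    calc ‖star c * (x - a) * c‖ ≤ ‖star c * (x - a)‖ * ‖c‖ := norm_mul_le _ _
      _ ≤ ‖star c‖ * ‖x - a‖ * ‖c‖ :=
        mul_le_mul_of_nonneg_right (norm_mul_le _ _) (norm_nonneg c)
      _ = ‖c‖ * ‖c‖ * ‖x - a‖ := by rw [norm_star]; ring
  calc ‖star c * x * c - y‖
      = ‖(star c * a * c - b) + (star c * (x - a) * c) + (b - y)‖ := by rw [← hid]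
    _ ≤ ‖(star c * a * c - b) + (star c * (x - a) * c)‖ + ‖b - y‖ := norm_add_le _ _
    _ ≤ (‖star c * a * c - b‖ + ‖star c * (x - a) * c‖) + ‖b - y‖ := by
        gcongr; exact norm_add_le _ _
    _ ≤ ‖star c * a * c - b‖ + ‖c‖ * ‖c‖ * ‖x - a‖ + ‖y - b‖ := by
        rw [norm_sub_rev b y]; linarith

theorem controlled_lift' {E D : Type*} [NonUnitalCStarAlgebra E] [NonUnitalCStarAlgebra D]
    (q : E →⋆ₙₐ[ℂ] D) (hq : Function.Surjective q) :
    ∃ C > (0 : ℝ), ∀ d : D, ∃ t : E, q t = d ∧ ‖t‖ ≤ C * ‖d‖ := by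
  have hb : ∀ x : E, ‖q x‖ ≤ 1 * ‖x‖ := by
    simpa using fun x => NonUnitalStarAlgHom.norm_apply_le q x
  let qL : E →L[ℂ] D :=
    { toFun := q
      map_add' := map_add q
      map_smul' := fun c x => by simp
      cont := AddMonoidHomClass.continuous_of_bound q 1 hb }
  obtain ⟨C, hC, h⟩ := qL.exists_preimage_norm_le hq
  exact ⟨C, hC, fun d => h d⟩

theorem surj_onto_of_dense' {E D : Type*} [NonUnitalCStarAlgebra E] [NonUnitalCStarAlgebra D]
    (q : E →⋆ₙₐ[ℂ] D) (hqcont : Continuous q)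
    (Es : NonUnitalStarSubalgebra ℂ E) (hEsc : IsClosed (Es : Set E))
    (Ds : NonUnitalStarSubalgebra ℂ D) (R : Set D) (hRD : R ⊆ (Ds : Set D))
    (hdense : (Ds : Set D) ⊆ closure R) (C : ℝ) (hC : 0 < C) (L : D → E)
    (hLm : ∀ r ∈ R, L r ∈ Es) (hLq : ∀ r ∈ R, q (L r) = r) (hLn : ∀ r ∈ R, ‖L r‖ ≤ C * ‖r‖)
    {d : D} (hd : d ∈ Ds) : ∃ s ∈ (Es : Set E), q s = d := by
  set B : ℝ := ‖d‖ + 1 with hB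
  have hBpos : 0 < B := by positivity
  set P : ℕ → E → Prop := fun n s => s ∈ Es ∧ q s ∈ Ds ∧ ‖d - q s‖ ≤ B * (1 / 2) ^ n with hP
  have base : P 0 0 := by
    refine ⟨zero_mem _, by simpa using zero_mem Ds, ?_⟩
    simp only [map_zero, sub_zero, pow_zero, mul_one]
    linarith [norm_nonneg d]
  have step : ∀ (n : ℕ) (s : E), P n s →
      ∃ s', P (n + 1) s' ∧ ‖s' - s‖ ≤ 2 * C * B * (1 / 2) ^ n := by
    rintro n s ⟨hs, hqs, hns⟩
    have hsub : d - q s ∈ (Ds : Set D) := sub_mem hd hqs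
    have hpos : (0 : ℝ) < B * (1 / 2) ^ (n + 1) := by positivity
    obtain ⟨r, hrR, hrd⟩ := Metric.mem_closure_iff.1 (hdense hsub) _ hpos
    rw [dist_eq_norm] at hrd
    refine ⟨s + L r, ⟨add_mem hs (hLm r hrR), ?_, ?_⟩, ?_⟩
    · rw [map_add, hLq r hrR]; exact add_mem hqs (hRD hrR)
    · rw [map_add, hLq r hrR]
      rw [sub_add_eq_sub_sub]
      exact hrd.le
    · rw [add_sub_cancel_left]
      have hr : ‖r‖ ≤ B * (1 / 2) ^ (n + 1) + B * (1 / 2) ^ n := by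
        have h2 : ‖r‖ ≤ ‖r - (d - q s)‖ + ‖d - q s‖ := by
          have := norm_add_le (r - (d - q s)) (d - q s)
          simpa using this
        rw [norm_sub_rev] at h2
        linarith
      calc ‖L r‖ ≤ C * ‖r‖ := hLn r hrR
        _ ≤ C * (B * (1 / 2) ^ (n + 1) + B * (1 / 2) ^ n) := by gcongr
        _ ≤ 2 * C * B * (1 / 2) ^ n := by
            have hp : (0:ℝ) ≤ C * B * (1 / 2) ^ n := by positivity
            rw [pow_succ]; nlinarith [hp]
  choose Φ hΦP hΦn using step
  let seq : ∀ n : ℕ, { s : E // P n s } := fun n =>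
    Nat.rec ⟨0, base⟩ (fun k prev => ⟨Φ k prev.1 prev.2, hΦP k prev.1 prev.2⟩) n
  let f : ℕ → E := fun n => (seq n).1
  have hfsucc : ∀ n, f (n + 1) = Φ n (f n) (seq n).2 := fun n => rfl
  have hcauchy : CauchySeq f := by
    refine cauchySeq_of_le_geometric (1 / 2) (2 * C * B) (by norm_num) fun n => ?_
    rw [dist_eq_norm, norm_sub_rev, hfsucc]
    exact hΦn n (f n) (seq n).2
  obtain ⟨s, hs⟩ := cauchySeq_tendsto_of_complete hcauchy
  have hsEs : s ∈ (Es : Set E) :=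
    hEsc.mem_of_tendsto hs (Filter.Eventually.of_forall fun n => (seq n).2.1)
  have h1 : Filter.Tendsto (fun n => q (f n)) Filter.atTop (nhds (q s)) :=
    (hqcont.tendsto s).comp hs
  have h2 : Filter.Tendsto (fun n => q (f n)) Filter.atTop (nhds d) := by
    rw [tendsto_iff_norm_sub_tendsto_zero]
    have hgeo : Filter.Tendsto (fun n : ℕ => B * (1 / 2 : ℝ) ^ n) Filter.atTop (nhds 0) := by
      simpa using (tendsto_pow_atTop_nhds_zero_of_lt_one (r := (1/2:ℝ)) (by norm_num) (by norm_num)).const_mul B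
    refine squeeze_zero (fun n => norm_nonneg _) (fun n => ?_) hgeo
    rw [norm_sub_rev]
    exact (seq n).2.2.2
  exact ⟨s, hsEs, tendsto_nhds_unique h1 h2⟩

theorem cutoff_ker' {E D : Type*} [NonUnitalCStarAlgebra E] [NonUnitalCStarAlgebra D]
    (q : E →⋆ₙₐ[ℂ] D) (hqcont : Continuous q) {y : E} (hy : IsSelfAdjoint y) (hqy : q y = 0)
    {δ : ℝ} (hδ : 0 < δ) :
    ∃ u : E, q u = 0 ∧ star u = u ∧ ‖u‖ ≤ 1 ∧ ‖u * y * u - y‖ ≤ δ := by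
  set f : ℝ → ℝ := fun t => min (|t| / δ) 1 with hf
  have hfc : Continuous f := (continuous_abs.div_const δ).min continuous_const
  have hf0 : f 0 = 0 := by simp [hf]
  have hf_nonneg : ∀ t, 0 ≤ f t := fun t => le_min (by positivity) zero_le_one
  have hf_le : ∀ t, f t ≤ 1 := fun t => min_le_right _ _
  have hq0 : IsSelfAdjoint (q y) := by rw [hqy]; exact IsSelfAdjoint.zero D
  refine ⟨cfcₙ f y, ?_, ?_, ?_, ?_⟩
  · have hmap := NonUnitalStarAlgHomClass.map_cfcₙ (S := ℂ) q f y hfc.continuousOn hf0 hqcont hy hq0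
    rw [hmap, hqy]
    have h0 : (quasispectrum ℝ (0 : D)).EqOn f 0 := by
      intro t ht
      rw [CFC.quasispectrum_zero_eq] at ht
      simp only [Set.mem_singleton_iff] at ht
      simp [ht, hf0]
    rw [cfcₙ_congr h0, cfcₙ_zero]
  · exact (cfcₙ_predicate f y : IsSelfAdjoint _)
  · refine norm_cfcₙ_le fun t ht => ?_
    rw [Real.norm_eq_abs, abs_of_nonneg (hf_nonneg t)]
    exact hf_le t
  · have c1 : ContinuousOn f (quasispectrum ℝ y) := hfc.continuousOn
    have c2 : ContinuousOn (fun t : ℝ => t) (quasispectrum ℝ y) := continuous_id.continuousOn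
    have c3 : ContinuousOn (fun t : ℝ => f t * t) (quasispectrum ℝ y) :=
      (hfc.mul continuous_id).continuousOn
    have c4 : ContinuousOn (fun t : ℝ => f t * t * f t) (quasispectrum ℝ y) :=
      ((hfc.mul continuous_id).mul hfc).continuousOn
    have key : cfcₙ (fun t : ℝ => f t * t * f t - t) y = cfcₙ f y * y * cfcₙ f y - y := by
      rw [cfcₙ_sub (fun t : ℝ => f t * t * f t) (fun t : ℝ => t) y c4 (by simp [hf0]) c2 rfl,
        cfcₙ_mul (fun t : ℝ => f t * t) f y c3 (by simp [hf0]) c1 hf0,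
        cfcₙ_mul f (fun t : ℝ => t) y c1 hf0 c2 rfl, cfcₙ_id' ℝ y]
    rw [← key]
    refine norm_cfcₙ_le fun t ht => ?_
    rw [Real.norm_eq_abs]
    rcases le_or_gt |t| δ with h | h
    · have h1 : f t * t * f t - t = t * (f t * f t - 1) := by ring
      rw [h1, abs_mul]
      have h2 : |f t * f t - 1| ≤ 1 := by
        rw [abs_le]
        constructor
        · nlinarith [hf_nonneg t]
        · nlinarith [hf_le t, hf_nonneg t]
      calc |t| * |f t * f t - 1| ≤ |t| * 1 := by gcongr
        _ ≤ δ := by rwa [mul_one]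
    · have h1 : f t = 1 := min_eq_right ((one_le_div hδ).2 h.le)
      simp only [h1, one_mul, mul_one, sub_self, abs_zero]
      exact hδ.le

end AuxiliaryLemmas

open TopologicalSpace NonUnitalStarAlgebra in
set_option maxHeartbeats 2000000 in
theorem statement12
    {E D : Type*} [NonUnitalCStarAlgebra E] [NonUnitalCStarAlgebra D]
    (q : E →⋆ₙₐ[ℂ] D) (hq : Function.Surjective q)
    (hPL : PurelyLarge q)
    (I₀ E₀ : NonUnitalStarSubalgebra ℂ E) (D₀ : NonUnitalStarSubalgebra ℂ D)
    (hI₀ : (I₀ : Set E) ⊆ {x : E | q x = 0})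
    (hI₀closed : IsClosed (I₀ : Set E)) (hI₀sep : TopologicalSpace.IsSeparable (I₀ : Set E))
    (hE₀closed : IsClosed (E₀ : Set E)) (hE₀sep : TopologicalSpace.IsSeparable (E₀ : Set E))
    (hD₀closed : IsClosed (D₀ : Set D)) (hD₀sep : TopologicalSpace.IsSeparable (D₀ : Set D)) :
    ∃ (Is Es : NonUnitalStarSubalgebra ℂ E) (Ds : NonUnitalStarSubalgebra ℂ D),
      -- separable C*-subalgebras
      IsClosed (Is : Set E) ∧ TopologicalSpace.IsSeparable (Is : Set E) ∧
      IsClosed (Es : Set E) ∧ TopologicalSpace.IsSeparable (Es : Set E) ∧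
      IsClosed (Ds : Set D) ∧ TopologicalSpace.IsSeparable (Ds : Set D) ∧
      -- (a)
      E₀ ≤ Es ∧
      -- (b)
      I₀ ≤ Is ∧ (Is : Set E) = (Es : Set E) ∩ {x : E | q x = 0} ∧
      -- (c)
      D₀ ≤ Ds ∧
      (Ds : Set D) = closure
        ((NonUnitalStarAlgebra.adjoin ℂ ((q '' (E₀ : Set E)) ∪ (D₀ : Set D)) :
            NonUnitalStarSubalgebra ℂ D) : Set D) ∧
      q '' (Es : Set E) = (Ds : Set D) ∧
      -- (d) the subextension `0 → I_s → E_s → D_s → 0` is purely large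
      (∀ y ∈ (Is : Set E), (∃ c : E, y = star c * c) →
        ∀ x ∈ (Es : Set E), (∃ c : E, x = star c * c) → x ∉ (Is : Set E) →
          ∀ ε > (0 : ℝ), ∃ c ∈ (Es : Set E), ‖star c * x * c - y‖ < ε) ∧
      -- (e)
      (IsSimplePurelyInfiniteSet {x : E | q x = 0} →
        IsSimplePurelyInfiniteSet (Is : Set E)) ∧
      -- in particular:
      (q '' (E₀ : Set E) = (D₀ : Set D) → (Ds : Set D) = (D₀ : Set D)) ∧
      (∀ e : E, (∀ x : E, e * x = x ∧ x * e = x) → e ∈ E₀ → e ∈ Es) := by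
  classical
  -- continuity of q
  have hqle : ∀ x : E, ‖q x‖ ≤ 1 * ‖x‖ := by
    simpa using fun x => NonUnitalStarAlgHom.norm_apply_le q x
  have hqcont : Continuous q := AddMonoidHomClass.continuous_of_bound q 1 hqle
  -- the kernel as a star subalgebra
  set K : NonUnitalStarSubalgebra ℂ E := NonUnitalStarSubalgebra.comap q ⊥ with hKdef
  have hK : (K : Set E) = {x : E | q x = 0} := by
    ext x
    simp [hKdef, NonUnitalStarSubalgebra.mem_comap, NonUnitalStarAlgebra.mem_bot]
  have hKclosed : IsClosed (K : Set E) := by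
    rw [hK]
    exact isClosed_singleton.preimage hqcont
  -- the target algebra Ds
  set DsA : NonUnitalStarSubalgebra ℂ D :=
    NonUnitalStarAlgebra.adjoin ℂ ((q '' (E₀ : Set E)) ∪ (D₀ : Set D)) with hDsAdef
  set Ds : NonUnitalStarSubalgebra ℂ D := DsA.topologicalClosure with hDsdef
  have hDscoe : (Ds : Set D) = closure (DsA : Set D) := rfl
  have hDsclosed : IsClosed (Ds : Set D) := DsA.isClosed_topologicalClosure
  have hDssep : TopologicalSpace.IsSeparable (Ds : Set D) :=
    (isSeparable_adjoin' ((hE₀sep.image hqcont).union hD₀sep)).closure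
  obtain ⟨R, hRsub, hRcount, hRdense⟩ := hDssep.exists_countable_dense_subset
  -- controlled lifts
  obtain ⟨C, hCpos, hlift⟩ := controlled_lift' q hq
  choose L hLq hLn using hlift
  -- extra generators for (e)
  have hXex : ∃ X : Set E, X.Countable ∧ (∀ x ∈ X, q x = 0) ∧
      (IsSimplePurelyInfiniteSet {x : E | q x = 0} →
        ∃ y₁ ∈ X, y₁ ≠ 0 ∧ ∃ x₁ ∈ X, ∀ c : ℂ, x₁ ≠ c • (star y₁ * y₁)) := by
    by_cases hSPI : IsSimplePurelyInfiniteSet {x : E | q x = 0}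
    · obtain ⟨y₁, hy₁mem, hy₁ne⟩ := hSPI.1
      set y₀ : E := star y₁ * y₁ with hy₀def
      have hy₀ker : q y₀ = 0 := by
        simp only [hy₀def, map_mul, map_star]
        rw [show q y₁ = 0 from hy₁mem]
        simp
      have hx₁ex : ∃ x₁, q x₁ = 0 ∧ ∀ c : ℂ, x₁ ≠ c • y₀ := by
        by_contra hcon
        push_neg at hcon
        refine hSPI.2.1 ⟨y₀, ?_⟩
        ext z
        constructor
        · intro hz
          obtain ⟨c, hc⟩ := hcon z hz
          exact ⟨c, hc⟩
        · rintro ⟨c, rfl⟩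
          show q (c • y₀) = 0
          rw [map_smul, hy₀ker, smul_zero]
      obtain ⟨x₁, hx₁ker, hx₁⟩ := hx₁ex
      refine ⟨{y₁, x₁}, (Set.countable_singleton x₁).insert y₁, ?_, ?_⟩
      · intro x hx
        simp only [Set.mem_insert_iff, Set.mem_singleton_iff] at hx
        rcases hx with h | h
        · rw [h]; exact hy₁mem
        · rw [h]; exact hx₁ker
      · intro _
        exact ⟨y₁, by simp, hy₁ne, x₁, by simp, hx₁⟩
    · exact ⟨∅, Set.countable_empty, by simp, fun h => absurd h hSPI⟩
  obtain ⟨X, hXc, hXker, hXspi⟩ := hXex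
  -- the witness function
  have hWex : ∀ (a b : E) (m k : ℕ), ∃ c : E, q c = 0 ∧
      ((∃ c' : E, q c' = 0 ∧ ‖c'‖ ≤ (m : ℝ) ∧ ‖star c' * a * c' - b‖ < 1 / ((k : ℝ) + 1)) →
        ‖c‖ ≤ (m : ℝ) ∧ ‖star c * a * c - b‖ < 1 / ((k : ℝ) + 1)) := by
    intro a b m k
    by_cases h : ∃ c' : E, q c' = 0 ∧ ‖c'‖ ≤ (m : ℝ) ∧ ‖star c' * a * c' - b‖ < 1 / ((k : ℝ) + 1)
    · obtain ⟨c, h1, h2, h3⟩ := h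
      exact ⟨c, h1, fun _ => ⟨h2, h3⟩⟩
    · exact ⟨0, map_zero q, fun hc => absurd hc h⟩
  choose W hWker hWspec using hWex
  -- countable dense subsets of the adjoin of countable sets
  have hDSex : ∀ S : Set E, ∃ T : Set E, S.Countable →
      T.Countable ∧ ((NonUnitalStarAlgebra.adjoin ℂ S : NonUnitalStarSubalgebra ℂ E) : Set E)
        ⊆ closure T := by
    intro S
    by_cases h : S.Countable
    · obtain ⟨T, hTc, hTd⟩ := isSeparable_adjoin' (A := E) h.isSeparable
      exact ⟨T, fun _ => ⟨hTc, hTd⟩⟩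
    · exact ⟨∅, fun hc => absurd hc h⟩
  choose DS hDS using hDSex
  -- dense countable subsets of E₀ and I₀
  obtain ⟨F₀, hF₀sub, hF₀c, hF₀d⟩ := hE₀sep.exists_countable_dense_subset
  obtain ⟨FI, hFIsub, hFIc, hFId⟩ := hI₀sep.exists_countable_dense_subset
  -- the recursive generating sets
  set G0 : Set E := F₀ ∪ FI ∪ (L '' R) ∪ X with hG0def
  set stp : Set E → Set E := fun S =>
    S ∪ ⋃ a ∈ DS S, ⋃ b ∈ DS S, ⋃ m : ℕ, ⋃ k : ℕ, {W a b m k} with hstpdef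
  set G : ℕ → Set E := fun n => Nat.rec G0 (fun _ S => stp S) n with hGdef
  have hGsucc : ∀ n, G (n + 1) = stp (G n) := fun _ => rfl
  have hG0c : G0.Countable :=
    ((hF₀c.union hFIc).union (hRcount.image L)).union hXc
  have hGc : ∀ n, (G n).Countable := by
    intro n
    induction n with
    | zero => exact hG0c
    | succ n ih =>
      rw [hGsucc]
      refine ih.union ?_
      refine Set.Countable.biUnion (hDS _ ih).1 fun a _ => ?_
      refine Set.Countable.biUnion (hDS _ ih).1 fun b _ => ?_
      exact Set.countable_iUnion fun m => Set.countable_iUnion fun k => Set.countable_singleton _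
  have hGmono : ∀ {m n : ℕ}, m ≤ n → G m ⊆ G n := by
    intro m n h
    induction h with
    | refl => exact subset_rfl
    | step _ ih =>
      refine ih.trans ?_
      rw [hGsucc]
      exact Set.subset_union_left
  set GU : Set E := ⋃ n, G n with hGUdef
  have hGUc : GU.Countable := Set.countable_iUnion hGc
  set EsA : NonUnitalStarSubalgebra ℂ E := NonUnitalStarAlgebra.adjoin ℂ GU with hEsAdef
  set Es : NonUnitalStarSubalgebra ℂ E := EsA.topologicalClosure with hEsdef
  have hEscoe : (Es : Set E) = closure (EsA : Set E) := rfl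
  have hEsclosed : IsClosed (Es : Set E) := EsA.isClosed_topologicalClosure
  have hEssep : TopologicalSpace.IsSeparable (Es : Set E) :=
    (isSeparable_adjoin' hGUc.isSeparable).closure
  set Is : NonUnitalStarSubalgebra ℂ E := Es ⊓ K with hIsdef
  have hIscoe : (Is : Set E) = (Es : Set E) ∩ {x : E | q x = 0} := by
    rw [hIsdef, NonUnitalStarAlgebra.coe_inf, hK]
  have hIsclosed : IsClosed (Is : Set E) := by
    rw [hIscoe]
    exact hEsclosed.inter (hK ▸ hKclosed)
  have hIssep : TopologicalSpace.IsSeparable (Is : Set E) :=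
    hEssep.mono (by rw [hIscoe]; exact Set.inter_subset_left)
  -- basic inclusions
  have hGsubGU : ∀ n, G n ⊆ GU := fun n => Set.subset_iUnion G n
  have hGUsubEs : GU ⊆ (Es : Set E) :=
    (NonUnitalStarAlgebra.subset_adjoin ℂ GU).trans subset_closure
  have hG0subEs : G0 ⊆ (Es : Set E) := (hGsubGU 0).trans hGUsubEs
  have hE₀le : E₀ ≤ Es := by
    intro x hx
    have h1 : x ∈ closure F₀ := hF₀d hx
    have h2 : closure F₀ ⊆ closure (EsA : Set E) := by
      refine closure_mono ?_
      refine Set.Subset.trans ?_ (NonUnitalStarAlgebra.subset_adjoin ℂ GU)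
      intro z hz
      exact hGsubGU 0 (Set.mem_union_left _ <| Set.mem_union_left _ <| Set.mem_union_left _ hz)
    exact h2 h1
  have hI₀le : I₀ ≤ Is := by
    intro x hx
    rw [← SetLike.mem_coe, hIscoe]
    constructor
    · have h1 : x ∈ closure FI := hFId hx
      have h2 : closure FI ⊆ closure (EsA : Set E) := by
        refine closure_mono ?_
        refine Set.Subset.trans ?_ (NonUnitalStarAlgebra.subset_adjoin ℂ GU)
        intro z hz
        exact hGsubGU 0 (Set.mem_union_left _ <| Set.mem_union_left _ <|
          Set.mem_union_right _ hz)
      exact h2 h1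
    · exact hI₀ hx
  have hD₀le : D₀ ≤ Ds := by
    intro d hd
    refine subset_closure ?_
    exact NonUnitalStarAlgebra.subset_adjoin ℂ _ (Set.mem_union_right _ hd)
  -- q maps the generators into Ds
  have hGq : ∀ n, ∀ x ∈ G n, q x ∈ Ds := by
    intro n
    induction n with
    | zero =>
      intro x hx
      rcases hx with ((h | h) | h) | h
      · refine subset_closure ?_
        exact NonUnitalStarAlgebra.subset_adjoin ℂ _
          (Set.mem_union_left _ ⟨x, hF₀sub h, rfl⟩)
      · have : q x = 0 := hI₀ (hFIsub h)
        rw [this]; exact zero_mem Ds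
      · obtain ⟨r, hr, rfl⟩ := h
        rw [hLq r]
        exact hRsub hr
      · rw [hXker x h]; exact zero_mem Ds
    | succ n ih =>
      intro x hx
      rw [hGsucc] at hx
      rcases hx with h | h
      · exact ih x h
      · simp only [Set.mem_iUnion, Set.mem_singleton_iff] at h
        obtain ⟨a, _, b, _, m, k, rfl⟩ := h
        rw [hWker]; exact zero_mem Ds
  have hEsAq : EsA ≤ NonUnitalStarSubalgebra.comap q Ds := by
    refine NonUnitalStarAlgebra.adjoin_le ?_
    intro x hx
    obtain ⟨n, hn⟩ := Set.mem_iUnion.1 hx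
    exact hGq n x hn
  have hqEs_sub : q '' (Es : Set E) ⊆ (Ds : Set D) := by
    rintro _ ⟨x, hx, rfl⟩
    have h1 : q x ∈ closure (q '' (EsA : Set E)) :=
      image_closure_subset_closure_image hqcont ⟨x, hx, rfl⟩
    have h2 : q '' (EsA : Set E) ⊆ (Ds : Set D) := by
      rintro _ ⟨z, hz, rfl⟩
      exact hEsAq hz
    exact closure_minimal h2 hDsclosed h1
  have hqEs : q '' (Es : Set E) = (Ds : Set D) := by
    refine Set.Subset.antisymm hqEs_sub ?_
    intro d hd
    have hLm : ∀ r ∈ R, L r ∈ Es := by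
      intro r hr
      exact hG0subEs (Set.mem_union_left _ <| Set.mem_union_right _ ⟨r, hr, rfl⟩)
    obtain ⟨s, hsEs, hqs⟩ := surj_onto_of_dense' q hqcont Es hEsclosed Ds R hRsub hRdense C hCpos
      L hLm (fun r _ => hLq r) (fun r _ => hLn r) hd
    exact ⟨s, hsEs, hqs⟩
  -- density machinery
  have hadj_mono : ∀ {m n : ℕ}, m ≤ n →
      (NonUnitalStarAlgebra.adjoin ℂ (G m) : NonUnitalStarSubalgebra ℂ E) ≤
        NonUnitalStarAlgebra.adjoin ℂ (G n) :=
    fun h => NonUnitalStarAlgebra.adjoin_le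
      ((hGmono h).trans (NonUnitalStarAlgebra.subset_adjoin ℂ _))
  have hfin : ∀ w ∈ EsA, ∃ n, w ∈ NonUnitalStarAlgebra.adjoin ℂ (G n) := by
    intro w hw
    induction hw using NonUnitalStarAlgebra.adjoin_induction with
    | mem z hz =>
      obtain ⟨n, hn⟩ := Set.mem_iUnion.1 hz
      exact ⟨n, NonUnitalStarAlgebra.subset_adjoin ℂ _ hn⟩
    | add z w' _ _ hz hw' =>
      obtain ⟨n₁, h₁⟩ := hz; obtain ⟨n₂, h₂⟩ := hw'
      exact ⟨max n₁ n₂, add_mem (hadj_mono (le_max_left n₁ n₂) h₁)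
        (hadj_mono (le_max_right n₁ n₂) h₂)⟩
    | zero => exact ⟨0, zero_mem _⟩
    | mul z w' _ _ hz hw' =>
      obtain ⟨n₁, h₁⟩ := hz; obtain ⟨n₂, h₂⟩ := hw'
      exact ⟨max n₁ n₂, mul_mem (hadj_mono (le_max_left n₁ n₂) h₁)
        (hadj_mono (le_max_right n₁ n₂) h₂)⟩
    | smul c z _ hz =>
      obtain ⟨n, hn⟩ := hz
      exact ⟨n, SMulMemClass.smul_mem c hn⟩
    | star z _ hz =>
      obtain ⟨n, hn⟩ := hz
      exact ⟨n, star_mem hn⟩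
  have hdense : ∀ z ∈ (Es : Set E), ∀ η > (0 : ℝ), ∃ n₀ : ℕ, ∀ n ≥ n₀,
      ∃ a ∈ DS (G n), ‖z - a‖ < η := by
    intro z hz η hη
    have hz' : z ∈ closure (EsA : Set E) := hz
    obtain ⟨w, hw, hwz⟩ := Metric.mem_closure_iff.1 hz' (η / 2) (by linarith)
    rw [dist_eq_norm] at hwz
    obtain ⟨n₀, hn₀⟩ := hfin w hw
    refine ⟨n₀, fun n hn => ?_⟩
    have hwn : w ∈ closure (DS (G n)) := (hDS _ (hGc n)).2 (hadj_mono hn hn₀)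
    obtain ⟨a, ha, hwa⟩ := Metric.mem_closure_iff.1 hwn (η / 2) (by linarith)
    rw [dist_eq_norm] at hwa
    refine ⟨a, ha, ?_⟩
    calc ‖z - a‖ = ‖(z - w) + (w - a)‖ := by rw [sub_add_sub_cancel]
      _ ≤ ‖z - w‖ + ‖w - a‖ := norm_add_le _ _
      _ < η / 2 + η / 2 := by exact add_lt_add hwz hwa
      _ = η := by ring
  have hWmem : ∀ (n : ℕ) (a b : E) (m k : ℕ), a ∈ DS (G n) → b ∈ DS (G n) →
      W a b m k ∈ (Es : Set E) := by
    intro n a b m k ha hb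
    refine hGUsubEs (hGsubGU (n + 1) ?_)
    rw [hGsucc]
    refine Set.mem_union_right _ ?_
    simp only [Set.mem_iUnion, Set.mem_singleton_iff]
    exact ⟨a, ha, b, hb, m, k, rfl⟩
  -- the approximation engine
  have key : ∀ x y : E, x ∈ (Es : Set E) → y ∈ (Es : Set E) → ∀ ε > (0 : ℝ),
      (∀ ε' > (0 : ℝ), ∃ c : E, q c = 0 ∧ ‖star c * x * c - y‖ < ε') →
      ∃ c, c ∈ (Es : Set E) ∧ q c = 0 ∧ ‖star c * x * c - y‖ < ε := by
    intro x y hx hy ε hε hex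
    obtain ⟨k, hk⟩ := exists_nat_one_div_lt (show (0 : ℝ) < ε / 2 by linarith)
    set κ : ℝ := 1 / ((k : ℝ) + 1) with hκdef
    have hκpos : 0 < κ := by positivity
    obtain ⟨c₁, hc₁ker, hc₁⟩ := hex (κ / 2) (by linarith)
    set m : ℕ := ⌈‖c₁‖⌉₊ with hmdef
    have hmge : ‖c₁‖ ≤ (m : ℝ) := Nat.le_ceil _
    set η : ℝ := κ / (2 * ((m : ℝ) * (m : ℝ) + 1)) with hηdef
    have hmnneg : (0 : ℝ) ≤ (m : ℝ) := Nat.cast_nonneg m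
    have hηpos : 0 < η := by positivity
    have hηeq : ((m : ℝ) * (m : ℝ) + 1) * η = κ / 2 := by
      rw [hηdef]
      field_simp
    obtain ⟨n₁, hn₁⟩ := hdense x hx η hηpos
    obtain ⟨n₂, hn₂⟩ := hdense y hy η hηpos
    obtain ⟨a, ha, hxa⟩ := hn₁ (max n₁ n₂) (le_max_left _ _)
    obtain ⟨b, hb, hyb⟩ := hn₂ (max n₁ n₂) (le_max_right _ _)
    have hwitness : ∃ c' : E, q c' = 0 ∧ ‖c'‖ ≤ (m : ℝ) ∧
        ‖star c' * a * c' - b‖ < 1 / ((k : ℝ) + 1) := by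
      refine ⟨c₁, hc₁ker, hmge, ?_⟩
      have htr := transfer_norm' c₁ a x b y
      have h1 : ‖c₁‖ * ‖c₁‖ * ‖a - x‖ ≤ (m : ℝ) * (m : ℝ) * η := by
        have : ‖a - x‖ ≤ η := by rw [norm_sub_rev]; exact hxa.le
        gcongr
      have h2 : ‖b - y‖ ≤ η := by rw [norm_sub_rev]; exact hyb.le
      calc ‖star c₁ * a * c₁ - b‖
          ≤ ‖star c₁ * x * c₁ - y‖ + ‖c₁‖ * ‖c₁‖ * ‖a - x‖ + ‖b - y‖ := htr
        _ < κ / 2 + ((m : ℝ) * (m : ℝ) * η + η) := by linarith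
        _ = κ / 2 + κ / 2 := by rw [← hηeq]; ring
        _ = 1 / ((k : ℝ) + 1) := by rw [hκdef]; ring
    obtain ⟨hWnorm, hWapprox⟩ := hWspec a b m k hwitness
    set c₀ : E := W a b m k with hc₀def
    refine ⟨c₀, hWmem (max n₁ n₂) a b m k ha hb, hWker a b m k, ?_⟩
    have htr := transfer_norm' c₀ x a y b
    have h1 : ‖c₀‖ * ‖c₀‖ * ‖x - a‖ ≤ (m : ℝ) * (m : ℝ) * η := by
      have : ‖x - a‖ ≤ η := hxa.le
      gcongr
    have h2 : ‖y - b‖ ≤ η := hyb.le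
    calc ‖star c₀ * x * c₀ - y‖
        ≤ ‖star c₀ * a * c₀ - b‖ + ‖c₀‖ * ‖c₀‖ * ‖x - a‖ + ‖y - b‖ := htr
      _ < κ + ((m : ℝ) * (m : ℝ) * η + η) := by
          have : ‖star c₀ * a * c₀ - b‖ < κ := hWapprox
          linarith
      _ = κ + κ / 2 := by rw [← hηeq]; ring
      _ < ε := by
          have : κ < ε / 2 := hk
          linarith
  -- assemble the answer
  refine ⟨Is, Es, Ds, hIsclosed, hIssep, hEsclosed, hEssep, hDsclosed, hDssep,
    hE₀le, hI₀le, hIscoe, hD₀le, hDscoe, hqEs, ?_, ?_, ?_, fun e _ he => hE₀le he⟩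
  · -- (d) purely large
    intro y hyIs hypos x hxEs hxpos hxnot ε hε
    have hy' : y ∈ (Es : Set E) ∧ q y = 0 := by rwa [hIscoe] at hyIs
    obtain ⟨hyEs, hyker⟩ := hy'
    have hqx : q x ≠ 0 := fun h => hxnot (by rw [hIscoe]; exact ⟨hxEs, h⟩)
    have hex : ∀ ε' > (0 : ℝ), ∃ c : E, q c = 0 ∧ ‖star c * x * c - y‖ < ε' := by
      intro ε' hε'
      obtain ⟨c, hc⟩ := hPL y x hyker hypos hxpos hqx (ε' / 2) (by linarith)
      have hysa : IsSelfAdjoint y := by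
        obtain ⟨w, rfl⟩ := hypos
        exact IsSelfAdjoint.star_mul_self w
      obtain ⟨u, huk, hus, hun, huy⟩ :=
        cutoff_ker' q hqcont hysa hyker (show (0 : ℝ) < ε' / 4 by linarith)
      refine ⟨c * u, by rw [map_mul, huk, mul_zero], ?_⟩
      have hrw : star (c * u) * x * (c * u) = u * (star c * x * c) * u := by
        rw [star_mul, hus]
        noncomm_ring
      rw [hrw]
      have hid : u * (star c * x * c) * u - y
          = u * (star c * x * c - y) * u + (u * y * u - y) := by noncomm_ring
      have hb : ‖u * (star c * x * c - y) * u‖ ≤ ‖star c * x * c - y‖ := by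
        calc ‖u * (star c * x * c - y) * u‖
            ≤ ‖u * (star c * x * c - y)‖ * ‖u‖ := norm_mul_le _ _
          _ ≤ ‖u‖ * ‖star c * x * c - y‖ * ‖u‖ := by
              gcongr
              exact norm_mul_le _ _
          _ ≤ 1 * ‖star c * x * c - y‖ * 1 := by gcongr
          _ = ‖star c * x * c - y‖ := by ring
      calc ‖u * (star c * x * c) * u - y‖
          = ‖u * (star c * x * c - y) * u + (u * y * u - y)‖ := by rw [hid]
        _ ≤ ‖u * (star c * x * c - y) * u‖ + ‖u * y * u - y‖ := norm_add_le _ _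
        _ < ε' / 2 + ε' / 4 := by
            have h1 : ‖u * (star c * x * c - y) * u‖ < ε' / 2 := lt_of_le_of_lt hb hc
            linarith
        _ < ε' := by linarith
    obtain ⟨c, hc1, _, hc3⟩ := key x y hxEs hyEs ε hε hex
    exact ⟨c, hc1, hc3⟩
  · -- (e) simple purely infinite
    intro hSPI
    obtain ⟨y₁, hy₁X, hy₁ne, x₁, hx₁X, hx₁⟩ := hXspi hSPI
    have hy₁Es : y₁ ∈ (Es : Set E) := hG0subEs (Set.mem_union_right _ hy₁X)
    have hx₁Es : x₁ ∈ (Es : Set E) := hG0subEs (Set.mem_union_right _ hx₁X)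
    have hy₁Is : y₁ ∈ (Is : Set E) := by
      rw [hIscoe]; exact ⟨hy₁Es, hXker y₁ hy₁X⟩
    have hx₁Is : x₁ ∈ (Is : Set E) := by
      rw [hIscoe]; exact ⟨hx₁Es, hXker x₁ hx₁X⟩
    refine ⟨⟨y₁, hy₁Is, hy₁ne⟩, ?_, ?_⟩
    · rintro ⟨e, he⟩
      set y₀ : E := star y₁ * y₁ with hy₀def
      have hy₀Is : y₀ ∈ (Is : Set E) := by
        exact mul_mem (star_mem (SetLike.mem_coe.1 hy₁Is)) (SetLike.mem_coe.1 hy₁Is)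
      have hy₀ne : y₀ ≠ 0 := by
        intro h
        exact hy₁ne ((CStarRing.star_mul_self_eq_zero_iff y₁).1 h)
      obtain ⟨c₁, hc₁⟩ : ∃ c : ℂ, y₀ = c • e := by rw [he] at hy₀Is; exact hy₀Is
      obtain ⟨c₂, hc₂⟩ : ∃ c : ℂ, x₁ = c • e := by rw [he] at hx₁Is; exact hx₁Is
      have hc₁ne : c₁ ≠ 0 := by
        rintro rfl
        rw [zero_smul] at hc₁
        exact hy₀ne hc₁
      refine hx₁ (c₂ / c₁) ?_
      rw [hc₁, smul_smul, div_mul_cancel₀ _ hc₁ne]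
      exact hc₂
    · intro x hxIs y hyIs hxpos hypos hxne ε hε
      have hx' : x ∈ (Es : Set E) ∧ q x = 0 := by rwa [hIscoe] at hxIs
      have hy' : y ∈ (Es : Set E) ∧ q y = 0 := by rwa [hIscoe] at hyIs
      have hex : ∀ ε' > (0 : ℝ), ∃ c : E, q c = 0 ∧ ‖star c * x * c - y‖ < ε' := by
        intro ε' hε'
        obtain ⟨c, hcmem, hcb⟩ := hSPI.2.2 x hx'.2 y hy'.2 hxpos hypos hxne ε' hε'
        exact ⟨c, hcmem, hcb⟩
      obtain ⟨c, hc1, hc2, hc3⟩ := key x y hx'.1 hy'.1 ε hε hex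
      refine ⟨c, ?_, hc3⟩
      rw [hIscoe]
      exact ⟨hc1, hc2⟩
  · -- particular case Ds = D₀
    intro hqE₀
    calc (Ds : Set D)
        = closure ((NonUnitalStarAlgebra.adjoin ℂ ((q '' (E₀ : Set E)) ∪ (D₀ : Set D)) :
            NonUnitalStarSubalgebra ℂ D) : Set D) := hDscoe
      _ = closure ((NonUnitalStarAlgebra.adjoin ℂ ((D₀ : Set D)) :
            NonUnitalStarSubalgebra ℂ D) : Set D) := by rw [hqE₀, Set.union_self]
      _ = closure (D₀ : Set D) := by rw [NonUnitalStarAlgebra.adjoin_eq]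
      _ = (D₀ : Set D) := hD₀closed.closure_eq
end
end

section
/- Let φ : A → D be a unital *-homomorphism between unital C*-algebras A and D, and let k ≥ 2 be a natural number. Then φ is full if and only if ι_D^{(k)} ∘ φ : A → M_k(D) is unitizably full, where ι_D^{(k)} : D → M_k(D) is the top-left corner embedding d ↦ diag(d, 0, …, 0). In particular, this holds for some k ≥ 2 if and only if it holds for all k ≥ 2. -/
/-!
STATEMENT 15: For a unital *-homomorphism `φ : A → D` between unital C*-algebras and
`k ≥ 2`, `φ` is full iff `ι_D^{(k)} ∘ φ : A → M_k(D)` is unitizably full, where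
`ι_D^{(k)}(d) = diag(d, 0, …, 0)` is the top-left corner embedding.  (Since this is proved
for every `k ≥ 2`, it holds for some `k ≥ 2` iff it holds for all `k ≥ 2`.)

Fullness of an element is: the closed two-sided ideal it generates is everything (the
topology on `M_k(D)` is the product topology, which agrees with that of any of the
equivalent norms on `M_k(D)`, in particular the C*-norm).  Unitizable fullness of
`ψ : A → M_k(D)` is encoded by: for all `a ∈ A`, `λ ∈ ℂ` not both zero, the element
`ψ(a) + λ·1` (the image of `a + λ1 ∈ A†` under `ψ†`) is full.
-/

noncomputable section

/-- An element of a topological ring is full if the closed two-sided ideal it generates is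
everything. -/
def IsFullElemT {D : Type*} [NonUnitalNonAssocRing D] [TopologicalSpace D] (a : D) : Prop :=
  closure ((TwoSidedIdeal.span {a} : TwoSidedIdeal D) : Set D) = Set.univ

/-!
The two-sided ideal of `M_k(D)` generated by a matrix unit `single i j d` is `M_k(J)`, where `J`
is the ideal generated by `d`, and as `M_k(D)` carries the product topology its closure is
`M_k(J̄)`; so `single i j d` is full exactly when `d` is. This settles `λ = 0` in both directions.
For `λ ≠ 0`, the entry of `ι(φ a) + λ1` at an off-corner diagonal position (here `k ≥ 2` is used)
is the unit `λ1`, and compressing by matrix units puts the corresponding matrix unit, hence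
everything, in the ideal.
-/

namespace TwoSidedIdeal

open Matrix

variable {R n : Type*} [Fintype n]

theorem span_single_eq_matrix [NonAssocRing R] [DecidableEq n] (i j : n) (d : R) :
    span {single i j d} = (span {d}).matrix n := by
  have : Nonempty n := ⟨i⟩
  refine le_antisymm (span_le.mpr ?_) ?_
  · rintro _ rfl i' j'
    rw [single_apply]
    split_ifs
    · exact subset_span rfl
    · exact (span {d}).zero_mem
  · calc (span {d}).matrix n = equivMatrix (span {d}) := rfl
      _ ≤ equivMatrix (equivMatrix.symm (span {single i j d})) :=
        orderIsoMatrix.monotone <| span_le.mpr <| Set.singleton_subset_iff.mpr <| by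
          rw [coe_equivMatrix_symm_apply _ i j]
          exact ⟨_, subset_span rfl, single_apply_same ..⟩
      _ = span {single i j d} := equivMatrix.apply_symm_apply _

theorem closure_coe_matrix [NonUnitalNonAssocRing R] [TopologicalSpace R]
    (I : TwoSidedIdeal R) :
    closure (I.matrix n : Set (Matrix n n R)) = {M | ∀ i j, M i j ∈ closure (I : Set R)} := by
  have hpi : {M : n → n → R | ∀ i j, M i j ∈ I} = Set.univ.pi fun _ => Set.univ.pi fun _ => I := by
    ext M; simp only [Set.mem_univ_pi]; rfl
  -- the topology on `Matrix n n R` is by definition that of `n → n → R`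
  change closure {M : n → n → R | ∀ i j, M i j ∈ I} = _
  rw [hpi, closure_pi_set]
  simp_rw [closure_pi_set]
  ext M
  simp only [Set.mem_univ_pi]
  rfl

end TwoSidedIdeal

section

open Matrix TwoSidedIdeal

variable {R n : Type*} [TopologicalSpace R] [Fintype n] [DecidableEq n]

theorem isFullElemT_of_isUnit [Ring R] {u : R} (hu : IsUnit u) : IsFullElemT u := by
  obtain ⟨v, rfl⟩ := hu
  have h1 : (1 : R) ∈ span {(v : R)} := by
    rw [← v.inv_mul]
    exact mul_mem_left _ _ _ (subset_span rfl)
  simp [IsFullElemT, (one_mem_iff _).mp h1]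

theorem isFullElemT_single_iff [NonAssocRing R] (i j : n) (d : R) :
    IsFullElemT (single i j d) ↔ IsFullElemT d := by
  simp only [IsFullElemT, span_single_eq_matrix, closure_coe_matrix, Set.eq_univ_iff_forall,
    Set.mem_ofPred_eq]
  exact ⟨fun h x => h (of fun _ _ => x) i j, fun h M _ _ => h _⟩

theorem IsFullElemT.of_apply [Ring R] {M : Matrix n n R} (i j : n) (h : IsFullElemT (M i j)) :
    IsFullElemT M := by
  rw [← isFullElemT_single_iff i j] at h
  have hle : span {single i j (M i j)} ≤ span {M} := by
    have hcorner : single i i (1 : R) * M * single j j 1 = single i j (M i j) := by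
      rw [single_mul_mul_single, one_mul, mul_one]
    rw [span_le, Set.singleton_subset_iff, ← hcorner]
    exact mul_mem_right _ _ _ (mul_mem_left _ _ _ (subset_span rfl))
  exact Set.eq_univ_of_univ_subset (h ▸ closure_mono hle)

end

theorem statement15
    {A D : Type*} [CStarAlgebra A] [CStarAlgebra D]
    (φ : A →⋆ₐ[ℂ] D) (k : ℕ) (hk : 2 ≤ k) :
    -- `φ` is full
    (∀ a : A, a ≠ 0 → IsFullElemT (φ a)) ↔
    -- iff `ι_D^{(k)} ∘ φ` is unitizably full
    (∀ (a : A) (lam : ℂ), ¬(a = 0 ∧ lam = 0) →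
      IsFullElemT
        (Matrix.single (⟨0, by omega⟩ : Fin k) (⟨0, by omega⟩ : Fin k) (φ a) +
          lam • (1 : Matrix (Fin k) (Fin k) D))) := by
  constructor
  · intro hφ a lam hne
    rcases eq_or_ne lam 0 with rfl | hlam
    · simpa [isFullElemT_single_iff] using hφ a (by tauto)
    · refine IsFullElemT.of_apply (⟨1, by omega⟩ : Fin k) ⟨1, by omega⟩ ?_
      have hunit : IsUnit (algebraMap ℂ D lam) := (isUnit_iff_ne_zero.mpr hlam).map _
      simpa [Matrix.single_apply, Algebra.algebraMap_eq_smul_one] using isFullElemT_of_isUnit hunit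
  · intro h a ha
    simpa [isFullElemT_single_iff] using h a 0 (by tauto)
end
end

section
/- Let A be a separable C*-algebra, B a unital C*-algebra, and ρ : A → B_∞ a *-homomorphism with the property that for every map η : ℕ → ℕ with η(n) → ∞, the *-homomorphisms π_{∞→ω} ∘ ρ and π_{∞→ω} ∘ η* ∘ ρ : A → B_ω are approximately unitarily equivalent. Then for every set-theoretic lift (ρ_n) of ρ (functions ρ_n : A → B such that for each a ∈ A the sequence (ρ_n(a))_n is bounded and represents ρ(a) in B_∞), every finite set F ⊆ A, every ε > 0 and every m ∈ ℕ, there exists k ≥ m such that for all n ≥ k there is a unitary u ∈ B with ‖u ρ_n(a) u* − ρ_k(a)‖ < ε for all a ∈ F. -/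
/-!
Suppose the conclusion fails from `m` on, and pick for every `k ≥ m` a bad index `η k ≥ k`.
The hypothesis for this `η` yields a unitary of `B_ω` conjugating `φ` close to `η* ∘ φ` on `F`.
Lift it to a bounded sequence `(x_k)`. Since an element of `ℓ∞(ℕ, B)` whose image in `B_ω` has
norm `< c` has `ω`-almost all coordinates of norm `< c`, for `ω`-almost every `k` the element `x_k`
is an approximate unitary conjugating `φ_k` close to `φ_{η k}`. Polar decomposition replaces
`x_k` by a nearby unitary, and for such a `k ≥ m` this contradicts the choice of `η k`.
-/

open Filter Topology
open scoped ENNReal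

noncomputable section

/-- Reindexing a bounded sequence along `η : ℕ → ℕ`. -/
def reindex {B : Type*} [NonUnitalCStarAlgebra B]
    (x : lp (fun _ : ℕ => B) ∞) (η : ℕ → ℕ) : lp (fun _ : ℕ => B) ∞ :=
  ⟨fun n => x (η n), by
    show Memℓp (fun n => x (η n)) ∞
    rw [memℓp_infty_iff]
    exact (lp.memℓp x).bddAbove.mono (by rintro y ⟨n, rfl⟩; exact ⟨η n, rfl⟩)⟩

open scoped CStarAlgebra

lemma reindex_apply {B : Type*} [NonUnitalCStarAlgebra B] (x : lp (fun _ : ℕ => B) ∞)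
    (η : ℕ → ℕ) (n : ℕ) : reindex x η n = x (η n) :=
  rfl

lemma abs_sqrt_sub_one_le {t : ℝ} (ht : 0 ≤ t) : |√t - 1| ≤ |t - 1| := by
  have hsq := Real.mul_self_sqrt ht
  calc |√t - 1| ≤ |√t - 1| * |√t + 1| := by
        refine le_mul_of_one_le_right (abs_nonneg _) ?_
        rw [abs_of_nonneg (by positivity)]
        linarith [Real.sqrt_nonneg t]
    _ = |t - 1| := by
      rw [← abs_mul]
      congr 1
      linear_combination hsq

lemma map_one_of_surjective {F M N : Type*} [MulOneClass M] [MulOneClass N] [FunLike F M N]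
    [MulHomClass F M N] {f : F} (hf : Function.Surjective f) : f 1 = 1 := by
  obtain ⟨y, hy⟩ := hf 1
  calc f 1 = f 1 * f y := by rw [hy, mul_one]
    _ = 1 := by rw [← map_mul, one_mul, hy]

lemma norm_mul_mul_star_sub_le {E : Type*} [NonUnitalNormedRing E] [StarRing E]
    [NormedStarGroup E] (u x b : E) :
    ‖u * b * star u - x * b * star x‖ ≤ ‖u - x‖ * ‖b‖ * (‖u‖ + ‖x‖) := by
  have h : u * b * star u - x * b * star x = (u - x) * b * star u + x * b * star (u - x) := by
    rw [star_sub]; noncomm_ring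
  rw [h]
  refine (norm_add_le _ _).trans ?_
  have h₁ := norm_mul₃_le (a := u - x) (b := b) (c := star u)
  have h₂ := norm_mul₃_le (a := x) (b := b) (c := star (u - x))
  rw [norm_star] at h₁ h₂
  linarith

namespace CStarAlgebra

variable {A : Type*} [CStarAlgebra A]

lemma abs_sub_one_le_of_mem_spectrum [Nontrivial A] {a : A} {t : ℝ} (ht : t ∈ spectrum ℝ a) :
    |t - 1| ≤ ‖a - 1‖ := by
  have : t - 1 ∈ spectrum ℝ (a - 1) := by
    rw [← map_one (algebraMap ℝ A), ← spectrum.sub_singleton_eq]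
    exact Set.sub_mem_sub ht rfl
  exact spectrum.norm_le_norm_of_mem this

lemma isUnit_of_norm_sub_one_lt_one {a : A} (ha : ‖a - 1‖ < 1) : IsUnit a := by
  simpa using isUnit_one_sub_of_norm_lt_one (x := 1 - a) (by rwa [norm_sub_rev])

lemma isUnit_of_isUnit_star_mul_self_of_isUnit_mul_star_self {x : A}
    (h₁ : IsUnit (star x * x)) (h₂ : IsUnit (x * star x)) : IsUnit x :=
  isUnit_iff_exists_and_exists.2
    ⟨⟨star x * h₂.unit⁻¹, by rw [← mul_assoc, h₂.mul_val_inv]⟩,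
      ⟨h₁.unit⁻¹ * star x, by rw [mul_assoc, h₁.val_inv_mul]⟩⟩

/-- Polar decomposition of an approximate unitary `x`: the unitary `x |x|⁻¹` lies within
`‖|x| - 1‖ ≤ ‖x⋆x - 1‖` of `x`. -/
lemma exists_mem_unitary_norm_sub_le {x : A} {δ : ℝ} (hδ : δ < 1)
    (h₁ : ‖star x * x - 1‖ ≤ δ) (h₂ : ‖x * star x - 1‖ ≤ δ) :
    ∃ u ∈ unitary A, ‖u - x‖ ≤ δ := by
  rcases subsingleton_or_nontrivial A with hA | hA
  · refine ⟨x, ⟨Subsingleton.elim _ _, Subsingleton.elim _ _⟩, ?_⟩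
    rw [sub_self, norm_zero]
    exact (norm_nonneg _).trans h₁
  set s := star x * x
  have hspec : ∀ t ∈ spectrum ℝ s, |t - 1| ≤ δ := fun t ht =>
    (abs_sub_one_le_of_mem_spectrum ht).trans h₁
  have hpos : ∀ t ∈ spectrum ℝ s, 0 < t := fun t ht => by
    linarith [neg_abs_le (t - 1), hspec t ht]
  have hsqrt : ContinuousOn Real.sqrt (spectrum ℝ s) := Real.continuous_sqrt.continuousOn
  have hsqrt_inv : ContinuousOn (fun t => (√t)⁻¹) (spectrum ℝ s) :=
    hsqrt.inv₀ fun t ht => (Real.sqrt_pos.2 (hpos t ht)).ne'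
  set r := cfc Real.sqrt s
  set h := cfc (fun t => (√t)⁻¹) s
  have hhr : h * r = 1 := by
    rw [← cfc_mul _ _ s hsqrt_inv hsqrt, ← cfc_one ℝ s]
    exact cfc_congr fun t ht => inv_mul_cancel₀ (Real.sqrt_pos.2 (hpos t ht)).ne'
  have hrh : r * h = 1 := by
    rw [← cfc_mul _ _ s hsqrt hsqrt_inv, ← cfc_one ℝ s]
    exact cfc_congr fun t ht => mul_inv_cancel₀ (Real.sqrt_pos.2 (hpos t ht)).ne'
  have hrr : r * r = s := by
    rw [← cfc_mul _ _ s hsqrt hsqrt]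
    exact (cfc_congr fun t ht => Real.mul_self_sqrt (hpos t ht).le).trans (cfc_id' ℝ s)
  have hx : IsUnit x := isUnit_of_isUnit_star_mul_self_of_isUnit_mul_star_self
    (isUnit_of_norm_sub_one_lt_one (h₁.trans_lt hδ))
    (isUnit_of_norm_sub_one_lt_one (h₂.trans_lt hδ))
  have hu : star (x * h) * (x * h) = 1 := by
    rw [star_mul, (cfc_predicate _ s : IsSelfAdjoint h).star_eq]
    calc h * star x * (x * h) = h * (r * r) * h := by rw [hrr]; simp only [s, mul_assoc]
      _ = h * r * (r * h) := by simp only [mul_assoc]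
      _ = 1 := by rw [hhr, hrh, one_mul]
  have hxh : x * h ∈ unitary A :=
    (hx.mul ⟨⟨h, r, hhr, hrh⟩, rfl⟩).mem_unitary_of_star_mul_self hu
  refine ⟨x * h, hxh, ?_⟩
  have hr1 : r - 1 = cfc (fun t => √t - 1) s := by
    rw [cfc_sub _ _ s hsqrt continuousOn_const, cfc_const_one ℝ s]
  calc ‖x * h - x‖ = ‖x * h * (1 - r)‖ := by
        rw [mul_sub, mul_one, mul_assoc x h r, hhr, mul_one]
    _ = ‖cfc (fun t => √t - 1) s‖ := by
        rw [CStarRing.norm_mem_unitary_mul _ hxh, norm_sub_rev, hr1]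
    _ ≤ δ := norm_cfc_le ((norm_nonneg _).trans h₁) fun t ht =>
      (abs_sqrt_sub_one_le (hpos t ht).le).trans (hspec t ht)

lemma norm_star_mul_mul_sub_eq {u : A} (hu : u ∈ unitary A) (d b : A) :
    ‖star u * d * u - b‖ = ‖d - u * b * star u‖ := by
  have h : d - u * b * star u = u * (star u * d * u - b) * star u := by
    simp only [mul_sub, sub_mul, ← mul_assoc, Unitary.mul_star_self_of_mem hu, one_mul]
    rw [mul_assoc d, Unitary.mul_star_self_of_mem hu, mul_one]
  rw [h, CStarRing.norm_mul_mem_unitary _ (Unitary.star_mem hu),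
    CStarRing.norm_mem_unitary_mul _ hu]

lemma norm_star_mul_mul_sub_lt [Nontrivial A] {u x b d : A} {δ ε : ℝ} (hu : u ∈ unitary A)
    (hux : ‖u - x‖ ≤ δ) (hδ : δ ≤ 1) (h : ‖x * b * star x - d‖ < ε) :
    ‖star u * d * u - b‖ < ε + 3 * δ * ‖b‖ := by
  have hu1 : ‖u‖ = 1 := CStarRing.norm_of_mem_unitary hu
  have hx : ‖x‖ ≤ 2 := by
    linarith [norm_le_norm_add_norm_sub' x u, norm_sub_rev x u]
  have hconj : ‖u * b * star u - x * b * star x‖ ≤ 3 * δ * ‖b‖ :=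
    (norm_mul_mul_star_sub_le u x b).trans <| by
      rw [hu1]
      nlinarith [norm_nonneg b, norm_nonneg (u - x),
        mul_nonneg (norm_nonneg b) (norm_nonneg (u - x))]
  rw [norm_star_mul_mul_sub_eq hu]
  calc ‖d - u * b * star u‖ ≤ ‖d - x * b * star x‖ + ‖x * b * star x - u * b * star u‖ :=
        norm_sub_le_norm_sub_add_norm_sub _ _ _
    _ < ε + 3 * δ * ‖b‖ := by
        rw [norm_sub_rev d, norm_sub_rev (x * b * star x) (u * b * star u)]
        exact add_lt_add_of_lt_of_le h hconj

end CStarAlgebra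

namespace lp

variable {ι : Type*}

section NonUnital

variable {A : ι → Type*} [∀ i, NonUnitalCStarAlgebra (A i)]

def evalNonUnitalStarAlgHom_s16 (i : ι) : lp A ∞ →⋆ₙₐ[ℂ] A i where
  toFun x := x i
  map_smul' c x := congr_fun (lp.coeFn_smul c x) i
  map_zero' := rfl
  map_add' x y := congr_fun (lp.coeFn_add x y) i
  map_mul' x y := congr_fun (lp.infty_coeFn_mul x y) i
  map_star' x := congr_fun (lp.coeFn_star x) i

lemma cfcₙ_apply_of_isStarNormal (f : ℂ → ℂ) (a : lp A ∞) (i : ι) (hf : Continuous f)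
    (hf₀ : f 0 = 0) [IsStarNormal a] : cfcₙ f a i = cfcₙ f (a i) :=
  (evalNonUnitalStarAlgHom_s16 i).map_cfcₙ f a

variable {C : Type*} [NonUnitalCStarAlgebra C] {l : Filter ι} (Q : lp A ∞ →⋆ₙₐ[ℂ] C)

/-- The cut-off `g z = max (‖z‖ - r) 0`, with `‖Q a‖ < r < c`, is killed by `Q`; so `‖g (a i)‖`
tends to `0` along `l`, which forces the quasispectrum of `a i` into the ball of radius `c`. -/
lemma eventually_norm_apply_lt_of_isStarNormal
    (hQ : ∀ x, Q x = 0 → Tendsto (fun i => ‖x i‖) l (𝓝 0)) {a : lp A ∞} [IsStarNormal a]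
    {c : ℝ} (hc : ‖Q a‖ < c) : ∀ᶠ i in l, ‖a i‖ < c := by
  obtain ⟨r, hQr, hrc⟩ := exists_between hc
  have hr : 0 < r := (norm_nonneg _).trans_lt hQr
  set g : ℂ → ℂ := fun z => ((max (‖z‖ - r) 0 : ℝ) : ℂ)
  have hg : Continuous g := by fun_prop
  have hg₀ : g 0 = 0 := by simp [g, hr.le]
  have hQg : Q (cfcₙ g a) = 0 := by
    rw [Q.map_cfcₙ g a]
    refine (cfcₙ_congr fun z hz => ?_).trans (cfcₙ_zero ℂ (Q a))
    have := NonUnitalIsometricContinuousFunctionalCalculus.norm_quasispectrum_le (Q a) hz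
    simp only [g, max_eq_right (by linarith : ‖z‖ - r ≤ 0), Complex.ofReal_zero, Pi.zero_apply]
  filter_upwards [(hQ _ hQg).eventually_lt_const (sub_pos.2 hrc)] with i hi
  have : IsStarNormal (a i) := IsStarNormal.map (evalNonUnitalStarAlgHom_s16 i) a
  rw [cfcₙ_apply_of_isStarNormal g a i hg hg₀, norm_cfcₙ_lt_iff g (a i)] at hi
  obtain ⟨z, hz, hza⟩ :=
    (NonUnitalIsometricContinuousFunctionalCalculus.isGreatest_norm_quasispectrum (𝕜 := ℂ)
      (a i)).1
  have hgz := hi z hz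
  simp only [g, Complex.norm_real, Real.norm_eq_abs] at hgz
  rw [← hza]
  linarith [le_abs_self (max (‖z‖ - r) 0), le_max_left (‖z‖ - r) 0]

lemma eventually_norm_apply_lt
    (hQ : ∀ x, Q x = 0 → Tendsto (fun i => ‖x i‖) l (𝓝 0)) {e : lp A ∞} {c : ℝ}
    (hc : ‖Q e‖ < c) : ∀ᶠ i in l, ‖e i‖ < c := by
  have hc₀ : 0 ≤ c := (norm_nonneg _).trans hc.le
  have h : ‖Q (star e * e)‖ < c ^ 2 := by
    rw [map_mul, map_star, CStarRing.norm_star_mul_self, ← sq]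
    exact pow_lt_pow_left₀ hc (norm_nonneg _) two_ne_zero
  have : IsStarNormal (star e * e) := (IsSelfAdjoint.star_mul_self e).isStarNormal
  filter_upwards [eventually_norm_apply_lt_of_isStarNormal Q hQ h] with i hi
  rw [lp.infty_coeFn_mul, lp.coeFn_star, Pi.mul_apply, Pi.star_apply,
    CStarRing.norm_star_mul_self, ← sq] at hi
  exact lt_of_pow_lt_pow_left₀ 2 hc₀ hi

end NonUnital

variable {B C : Type*} [CStarAlgebra B] [Nontrivial B] [CStarAlgebra C] {l : Filter ι}
  (Q : lp (fun _ : ι => B) ∞ →⋆ₙₐ[ℂ] C)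
  (hQ : ∀ x, Q x = 0 → Tendsto (fun i => ‖x i‖) l (𝓝 0)) (hQ₁ : Q 1 = 1)
include hQ hQ₁

lemma eventually_norm_star_mul_self_sub_one_lt {x : lp (fun _ : ι => B) ∞}
    (hx : Q x ∈ unitary C) {δ : ℝ} (hδ : 0 < δ) :
    ∀ᶠ i in l, ‖star (x i) * x i - 1‖ < δ ∧ ‖x i * star (x i) - 1‖ < δ := by
  have h₁ : ‖Q (star x * x - 1)‖ < δ := by
    rw [map_sub, map_mul, map_star, hQ₁, Unitary.star_mul_self_of_mem hx, sub_self]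
    simpa using hδ
  have h₂ : ‖Q (x * star x - 1)‖ < δ := by
    rw [map_sub, map_mul, map_star, hQ₁, Unitary.mul_star_self_of_mem hx, sub_self]
    simpa using hδ
  filter_upwards [eventually_norm_apply_lt Q hQ h₁, eventually_norm_apply_lt Q hQ h₂]
    with i hi₁ hi₂
  exact ⟨hi₁, hi₂⟩

lemma eventually_exists_mem_unitary_norm_conj_sub_lt {x : lp (fun _ : ι => B) ∞}
    (hx : Q x ∈ unitary C) {α : Type*} (F : Finset α) (b d : α → lp (fun _ : ι => B) ∞)
    {ε : ℝ} (hε : 0 < ε) (h : ∀ a ∈ F, ‖Q (x * b a * star x - d a)‖ < ε / 2) :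
    ∀ᶠ i in l, ∃ u ∈ unitary B, ∀ a ∈ F, ‖star u * d a i * u - b a i‖ < ε := by
  set M := ∑ a ∈ F, ‖b a‖
  have hM : 0 ≤ M := Finset.sum_nonneg fun a _ => norm_nonneg _
  set δ := min (1 / 2) (ε / (6 * (M + 1)))
  have hδ : 0 < δ := lt_min (by norm_num) (by positivity)
  have hδ₁ : δ < 1 := (min_le_left _ _).trans_lt (by norm_num)
  have hδM : 3 * δ * (M + 1) ≤ ε / 2 :=
    calc 3 * δ * (M + 1) ≤ 3 * (ε / (6 * (M + 1))) * (M + 1) := by gcongr; exact min_le_right _ _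
      _ = ε / 2 := by field_simp; ring
  filter_upwards [eventually_norm_star_mul_self_sub_one_lt Q hQ hQ₁ hx hδ,
    (Finset.eventually_all F).2 fun a ha => eventually_norm_apply_lt Q hQ (h a ha)]
    with i ⟨h₁, h₂⟩ hconj
  obtain ⟨u, hu, hux⟩ := CStarAlgebra.exists_mem_unitary_norm_sub_le hδ₁ h₁.le h₂.le
  refine ⟨u, hu, fun a ha => ?_⟩
  have hb : ‖b a i‖ ≤ M + 1 :=
    (lp.norm_apply_le_norm ENNReal.top_ne_zero (b a) i).trans
      ((Finset.single_le_sum (fun a _ => norm_nonneg (b a)) ha).trans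
        (le_add_of_nonneg_right zero_le_one))
  calc ‖star u * d a i * u - b a i‖ < ε / 2 + 3 * δ * ‖b a i‖ :=
        CStarAlgebra.norm_star_mul_mul_sub_lt hu hux hδ₁.le (hconj a ha)
    _ ≤ ε := by nlinarith

end lp

theorem statement16_general
    {B : Type*} [CStarAlgebra B]
    {A : Type*} [NonUnitalCStarAlgebra A]
    -- the sequence algebra `B_∞`, encoded abstractly:
    {Binf : Type*} [NonUnitalCStarAlgebra Binf]
    (πB : lp (fun _ : ℕ => B) ∞ →⋆ₙₐ[ℂ] Binf)
    (hπsurj : Function.Surjective πB)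
    -- a free ultrafilter `ω` on `ℕ` and the ultrapower `B_ω`, encoded abstractly:
    (ω : Ultrafilter ℕ) (hω : (ω : Filter ℕ) ≤ Filter.cofinite)
    {Bom : Type*} [CStarAlgebra Bom]
    (πω : Binf →⋆ₙₐ[ℂ] Bom) (hωsurj : Function.Surjective πω)
    (hωker : ∀ x : lp (fun _ : ℕ => B) ∞,
      πω (πB x) = 0 ↔ Tendsto (fun n => ‖x n‖) (ω : Filter ℕ) (𝓝 0))
    -- the *-homomorphism `φ : A → B_∞`
    (φ : A →⋆ₙₐ[ℂ] Binf)
    -- hypothesis: for every `η → ∞`, `π_{∞→ω} ∘ φ` and `π_{∞→ω} ∘ η* ∘ φ` are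
    -- approximately unitarily equivalent (expressed via any set-theoretic lift `L` of `φ`)
    (hequiv : ∀ η : ℕ → ℕ, Tendsto η atTop atTop →
      ∀ L : A → lp (fun _ : ℕ => B) ∞, (∀ a, πB (L a) = φ a) →
        ∃ u : ℕ → Bom, (∀ j, star (u j) * u j = 1 ∧ u j * star (u j) = 1) ∧
          ∀ a : A, Tendsto
            (fun j => ‖u j * πω (φ a) * star (u j) - πω (πB (reindex (L a) η))‖)
            atTop (𝓝 0)) :
    -- conclusion:
    ∀ L : A → lp (fun _ : ℕ => B) ∞, (∀ a, πB (L a) = φ a) →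
      ∀ F : Finset A, ∀ ε > (0 : ℝ), ∀ m : ℕ,
        ∃ k, m ≤ k ∧ ∀ n, k ≤ n →
          ∃ u : B, (star u * u = 1 ∧ u * star u = 1) ∧
            ∀ a ∈ F, ‖u * (L a) n * star u - (L a) k‖ < ε := by
  intro L hL F ε hε m
  rcases subsingleton_or_nontrivial B with hB | hB
  · refine ⟨m, le_rfl, fun n _ => ⟨1, ⟨Subsingleton.elim _ _, Subsingleton.elim _ _⟩,
      fun a _ => ?_⟩⟩
    rwa [Subsingleton.elim (1 * (L a) n * star 1 - (L a) m) 0, norm_zero]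
  by_contra! hbad
  have (k : ℕ) : ∃ n, k ≤ n ∧ (m ≤ k → ∀ u : B, star u * u = 1 ∧ u * star u = 1 →
      ∃ a ∈ F, ε ≤ ‖u * (L a) n * star u - (L a) k‖) := by
    by_cases hk : m ≤ k
    · obtain ⟨n, hkn, hn⟩ := hbad k hk
      exact ⟨n, hkn, fun _ => hn⟩
    · exact ⟨k, le_rfl, fun h => absurd h hk⟩
  choose η hη hηbad using this
  set Q := πω.comp πB
  have hQ (x) : Q x = 0 → Tendsto (fun n => ‖x n‖) (ω : Filter ℕ) (𝓝 0) := (hωker x).1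
  have hQsurj : Function.Surjective Q := hωsurj.comp hπsurj
  obtain ⟨U, hU, hUη⟩ := hequiv η (tendsto_atTop_mono hη tendsto_id) L hL
  obtain ⟨j, hj⟩ := ((Finset.eventually_all F).2 fun a _ =>
    (hUη a).eventually_lt_const (half_pos hε)).exists
  obtain ⟨x, hx⟩ := hQsurj (U j)
  have hconj (a) (ha : a ∈ F) : ‖Q (x * L a * star x - reindex (L a) η)‖ < ε / 2 := by
    rw [map_sub, map_mul, map_mul, map_star, hx]
    simpa [Q, hL] using hj a ha
  obtain ⟨k, ⟨u, hu, hku⟩, hkm⟩ :=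
    ((lp.eventually_exists_mem_unitary_norm_conj_sub_lt Q hQ (map_one_of_surjective hQsurj)
      (hx ▸ Unitary.mem_iff.2 (hU j)) F L (fun a => reindex (L a) η) hε hconj).and
      ((eventually_ge_atTop m).filter_mono (hω.trans Nat.cofinite_eq_atTop.le))).exists
  obtain ⟨a, ha, hεa⟩ := hηbad k hkm (star u) (by simpa using (Unitary.mem_iff.1 hu).symm)
  exact hεa.not_gt (by simpa only [star_star, reindex_apply] using hku a ha)

theorem statement16
    {B : Type*} [CStarAlgebra B]
    {A : Type*} [NonUnitalCStarAlgebra A] [TopologicalSpace.SeparableSpace A]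
    -- the sequence algebra `B_∞`, encoded abstractly:
    {Binf : Type*} [NonUnitalCStarAlgebra Binf]
    (πB : lp (fun _ : ℕ => B) ∞ →⋆ₙₐ[ℂ] Binf)
    (hπsurj : Function.Surjective πB)
    (hπker : ∀ x : lp (fun _ : ℕ => B) ∞,
      πB x = 0 ↔ Tendsto (fun n => ‖x n‖) atTop (𝓝 0))
    -- a free ultrafilter `ω` on `ℕ` and the ultrapower `B_ω`, encoded abstractly:
    (ω : Ultrafilter ℕ) (hω : (ω : Filter ℕ) ≤ Filter.cofinite)
    {Bom : Type*} [CStarAlgebra Bom]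
    (πω : Binf →⋆ₙₐ[ℂ] Bom) (hωsurj : Function.Surjective πω)
    (hωker : ∀ x : lp (fun _ : ℕ => B) ∞,
      πω (πB x) = 0 ↔ Tendsto (fun n => ‖x n‖) (ω : Filter ℕ) (𝓝 0))
    -- the *-homomorphism `φ : A → B_∞`
    (φ : A →⋆ₙₐ[ℂ] Binf)
    -- hypothesis: for every `η → ∞`, `π_{∞→ω} ∘ φ` and `π_{∞→ω} ∘ η* ∘ φ` are
    -- approximately unitarily equivalent (expressed via any set-theoretic lift `L` of `φ`)
    (hequiv : ∀ η : ℕ → ℕ, Tendsto η atTop atTop →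
      ∀ L : A → lp (fun _ : ℕ => B) ∞, (∀ a, πB (L a) = φ a) →
        ∃ u : ℕ → Bom, (∀ j, star (u j) * u j = 1 ∧ u j * star (u j) = 1) ∧
          ∀ a : A, Tendsto
            (fun j => ‖u j * πω (φ a) * star (u j) - πω (πB (reindex (L a) η))‖)
            atTop (𝓝 0)) :
    -- conclusion:
    ∀ L : A → lp (fun _ : ℕ => B) ∞, (∀ a, πB (L a) = φ a) →
      ∀ F : Finset A, ∀ ε > (0 : ℝ), ∀ m : ℕ,
        ∃ k, m ≤ k ∧ ∀ n, k ≤ n →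
          ∃ u : B, (star u * u = 1 ∧ u * star u = 1) ∧
            ∀ a ∈ F, ‖u * (L a) n * star u - (L a) k‖ < ε :=
  statement16_general πB hπsurj ω hω πω hωsurj hωker φ hequiv
end
end

section
/- Let B be a C*-algebra, b ∈ B a positive element with ‖b‖ = 1 whose spectrum is infinite, and ρ a state on B. Then for every n ≥ 1 there exists a positive element z in the C*-subalgebra C*(b) generated by b with ‖z‖ = 1 and ρ(z²) ≤ 1/n. -/
/-!
Since `b` is self-adjoint, its spectrum is real, so it contains `n + 1` distinct nonzero points.
Tent functions centred at these points, with pairwise disjoint supports that miss `0`, give via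
the continuous functional calculus positive elements `z x ∈ C*(b)` of norm one such that
`∑ x, z x ^ 2` has norm at most one. As `‖ρ‖ = 1`, the real parts of the `ρ (z x ^ 2)` add up to
at most one, so one of them is at most `1 / (n + 1)`.
-/

noncomputable section

open Filter Topology

def tent {X : Type*} [PseudoMetricSpace X] (c : X) (ε : ℝ) (t : X) : ℝ :=
  max 0 (1 - dist t c / ε)

section Tent

variable {X : Type*} [PseudoMetricSpace X] {c d : X} {ε : ℝ}

@[fun_prop]
lemma continuous_tent (c : X) (ε : ℝ) : Continuous (tent c ε) :=
  continuous_const.max (by fun_prop)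

lemma tent_nonneg (c : X) (ε : ℝ) (t : X) : 0 ≤ tent c ε t :=
  le_max_left _ _

lemma tent_le_one (hε : 0 ≤ ε) (c t : X) : tent c ε t ≤ 1 :=
  max_le zero_le_one (sub_le_self _ (div_nonneg dist_nonneg hε))

@[simp]
lemma tent_self (c : X) (ε : ℝ) : tent c ε c = 1 := by
  simp [tent]

lemma tent_eq_zero_of_le_dist (hε : 0 < ε) {t : X} (h : ε ≤ dist t c) : tent c ε t = 0 :=
  max_eq_left (sub_nonpos.2 ((one_le_div hε).2 h))

lemma tent_mul_tent_eq_zero (hε : 0 < ε) (h : 2 * ε ≤ dist c d) (t : X) :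
    tent c ε t * tent d ε t = 0 := by
  by_cases htc : ε ≤ dist t c
  · rw [tent_eq_zero_of_le_dist hε htc, zero_mul]
  · have htd : ε ≤ dist t d := by linarith [dist_triangle_left c d t]
    rw [tent_eq_zero_of_le_dist hε htd, mul_zero]

end Tent

lemma Finset.exists_pos_two_mul_le_dist {X : Type*} [MetricSpace X] (t : Finset X) :
    ∃ ε > 0, ∀ x ∈ t, ∀ y ∈ t, x ≠ y → 2 * ε ≤ dist x y := by
  have h : ∀ᶠ ε in 𝓝[>] (0 : ℝ), 0 < ε ∧ ∀ x ∈ t, ∀ y ∈ t, x ≠ y → 2 * ε ≤ dist x y := by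
    refine eventually_mem_nhdsWithin.and ?_
    simp only [Filter.eventually_all_finset, Filter.eventually_imp_distrib_left]
    intro x _ y _ hxy
    filter_upwards [nhdsWithin_le_nhds (Iic_mem_nhds (half_pos (dist_pos.2 hxy)))] with ε hε
    linarith [Set.mem_Iic.1 hε]
  obtain ⟨ε, hε, hsep⟩ := h.exists
  exact ⟨ε, hε, hsep⟩

lemma Finset.sum_sq_le_one_of_mul_eq_zero {ι : Type*} {s : Finset ι} {f : ι → ℝ}
    (hf : ∀ i ∈ s, |f i| ≤ 1) (horth : ∀ i ∈ s, ∀ j ∈ s, i ≠ j → f i * f j = 0) :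
    ∑ i ∈ s, f i ^ 2 ≤ 1 := by
  by_cases h : ∃ j ∈ s, f j ≠ 0
  · obtain ⟨j, hj, hfj⟩ := h
    rw [Finset.sum_eq_single_of_mem j hj fun i hi hij => by
      simpa [hfj] using horth i hi j hj hij]
    exact sq_le_one_iff_abs_le_one _ |>.2 (hf j hj)
  · push Not at h
    rw [Finset.sum_eq_zero fun i hi => by simp [h i hi]]
    exact zero_le_one

lemma ContinuousLinearMap.exists_re_apply_le_one_div_card {𝕜 E ι : Type*} [RCLike 𝕜]
    [SeminormedAddCommGroup E] [NormedSpace 𝕜 E] {ρ : E →L[𝕜] 𝕜} (hρ : ‖ρ‖ ≤ 1)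
    {s : Finset ι} (hs : s.Nonempty) {x : ι → E} (hx : ‖∑ i ∈ s, x i‖ ≤ 1) :
    ∃ i ∈ s, RCLike.re (ρ (x i)) ≤ 1 / s.card := by
  refine Finset.exists_le_of_sum_le hs ?_
  calc ∑ i ∈ s, RCLike.re (ρ (x i)) = RCLike.re (ρ (∑ i ∈ s, x i)) := by simp
    _ ≤ ‖ρ (∑ i ∈ s, x i)‖ := RCLike.re_le_norm _
    _ ≤ ‖ρ‖ * ‖∑ i ∈ s, x i‖ := ρ.le_opNorm _
    _ ≤ 1 := mul_le_one₀ hρ (norm_nonneg _) hx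
    _ = ∑ _i ∈ s, 1 / (s.card : ℝ) := by
      rw [Finset.sum_const, nsmul_eq_mul, mul_one_div_cancel (by exact_mod_cast hs.card_ne_zero)]

section CStarAlgebra

variable {A : Type*} [NonUnitalCStarAlgebra A]

lemma norm_cfcₙ_eq_one {f : ℝ → ℝ} {a : A} (ha : IsSelfAdjoint a)
    (hf : ContinuousOn f (quasispectrum ℝ a)) (hf0 : f 0 = 0)
    (hle : ∀ x ∈ quasispectrum ℝ a, |f x| ≤ 1) {x : ℝ} (hx : x ∈ quasispectrum ℝ a)
    (hfx : f x = 1) : ‖cfcₙ f a‖ = 1 := by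
  refine le_antisymm (norm_cfcₙ_le hle) ?_
  simpa [hfx] using norm_apply_le_norm_cfcₙ f a hx hf hf0 ha

lemma exists_cfcₙ_eq_star_mul_self {f : ℝ → ℝ} (a : A)
    (hf : ContinuousOn f (quasispectrum ℝ a)) (hf0 : f 0 = 0)
    (hnonneg : ∀ x ∈ quasispectrum ℝ a, 0 ≤ f x) : ∃ c : A, cfcₙ f a = star c * c := by
  have hsqrt : ContinuousOn (fun t => √(f t)) (quasispectrum ℝ a) :=
    Real.continuous_sqrt.comp_continuousOn hf
  have hsqrt0 : √(f 0) = 0 := by rw [hf0, Real.sqrt_zero]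
  refine ⟨cfcₙ (fun t => √(f t)) a, ?_⟩
  rw [(cfcₙ_predicate _ a : IsSelfAdjoint _).star_eq, ← cfcₙ_mul _ _ a hsqrt hsqrt0 hsqrt hsqrt0]
  exact cfcₙ_congr fun x hx => (Real.mul_self_sqrt (hnonneg x hx)).symm

lemma sum_cfcₙ_mul_self {ι : Type*} (s : Finset ι) {f : ι → ℝ → ℝ} (a : A)
    (hf : ∀ i ∈ s, Continuous (f i)) (hf0 : ∀ i ∈ s, f i 0 = 0) :
    ∑ i ∈ s, cfcₙ (f i) a * cfcₙ (f i) a = cfcₙ (fun t => ∑ i ∈ s, f i t ^ 2) a := by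
  have hsum : (fun t => ∑ i ∈ s, f i t ^ 2) = ∑ i ∈ s, fun t => f i t * f i t := by
    ext t; simp [sq]
  rw [hsum, cfcₙ_sum (fun i t => f i t * f i t) a s
    (fun i hi => ((hf i hi).mul (hf i hi)).continuousOn) (fun i hi => by simp [hf0 i hi])]
  exact Finset.sum_congr rfl fun i hi =>
    (cfcₙ_mul _ _ a (hf i hi).continuousOn (hf0 i hi) (hf i hi).continuousOn (hf0 i hi)).symm

lemma IsSelfAdjoint.exists_positive_norm_one_elemental_sum_mul_self_le_one {a : A}
    (ha : IsSelfAdjoint a) {s : Finset ℝ} (hs : ↑s ⊆ quasispectrum ℝ a \ {0}) :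
    ∃ z : ℝ → A, (∀ x ∈ s, z x ∈ NonUnitalStarAlgebra.elemental ℂ a ∧
      (∃ c, z x = star c * c) ∧ ‖z x‖ = 1) ∧ ‖∑ x ∈ s, z x * z x‖ ≤ 1 := by
  obtain ⟨ε, hε, hsep⟩ := (insert 0 s).exists_pos_two_mul_le_dist
  have hsep' : ∀ x ∈ s, ∀ y ∈ s, x ≠ y → 2 * ε ≤ dist x y := fun x hx y hy =>
    hsep x (Finset.mem_insert_of_mem hx) y (Finset.mem_insert_of_mem hy)
  have htent0 : ∀ x ∈ s, tent x ε 0 = 0 := fun x hx =>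
    tent_eq_zero_of_le_dist hε <| by
      have := hsep 0 (Finset.mem_insert_self 0 s) x (Finset.mem_insert_of_mem hx)
        (fun h => (hs hx).2 h.symm)
      linarith
  have htent_abs : ∀ x t : ℝ, |tent x ε t| ≤ 1 := fun x t => by
    rw [abs_of_nonneg (tent_nonneg x ε t)]; exact tent_le_one hε.le x t
  refine ⟨fun x => cfcₙ (tent x ε) a, fun x hx => ⟨?_, ?_, ?_⟩, ?_⟩
  · have := NonUnitalStarAlgebra.elemental.isClosed ℂ a
    exact cfcₙ_mem (𝕜 := ℝ) _ (NonUnitalStarAlgebra.elemental.self_mem ℂ a)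
  · exact exists_cfcₙ_eq_star_mul_self a (continuous_tent x ε).continuousOn (htent0 x hx)
      fun t _ => tent_nonneg x ε t
  · exact norm_cfcₙ_eq_one ha (continuous_tent x ε).continuousOn (htent0 x hx)
      (fun t _ => htent_abs x t) (hs hx).1 (tent_self x ε)
  · rw [sum_cfcₙ_mul_self s a (fun x _ => continuous_tent x ε) htent0]
    refine norm_cfcₙ_le fun t _ => ?_
    rw [Real.norm_of_nonneg (by positivity)]
    exact Finset.sum_sq_le_one_of_mul_eq_zero (fun x _ => htent_abs x t)
      fun x hx y hy hxy => tent_mul_tent_eq_zero hε (hsep' x hx y hy hxy) t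

end CStarAlgebra

theorem statement18_general
    {B : Type*} [NonUnitalCStarAlgebra B]
    (ρ : B →L[ℂ] ℂ) (hρ : IsState ρ)
    (b : B) (hbpos : ∃ c : B, b = star c * c)
    (hbspec : (quasispectrum ℂ b).Infinite)
    (n : ℕ) (hn : 1 ≤ n) :
    ∃ z ∈ closure ((NonUnitalStarAlgebra.adjoin ℂ {b} : NonUnitalStarSubalgebra ℂ B) : Set B),
      (∃ c : B, z = star c * c) ∧ ‖z‖ = 1 ∧ (ρ (z * z)).re ≤ 1 / n := by
  have hb : IsSelfAdjoint b := by
    obtain ⟨c, rfl⟩ := hbpos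
    exact .star_mul_self c
  have hspec : (quasispectrum ℝ b \ {0}).Infinite := by
    have hres := (isSelfAdjoint_iff_isStarNormal_and_quasispectrumRestricts.1 hb).2
    exact ((hres.algebraMap_image ▸ hbspec).of_image _).sdiff (Set.finite_singleton 0)
  obtain ⟨s, hs, hcard⟩ := hspec.exists_subset_card_eq (n + 1)
  obtain ⟨z, hz, hsum⟩ := hb.exists_positive_norm_one_elemental_sum_mul_self_le_one hs
  obtain ⟨x, hx, hρx⟩ := ContinuousLinearMap.exists_re_apply_le_one_div_card hρ.1.le
    (Finset.card_pos.1 (by omega)) hsum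
  obtain ⟨hzb, hzpos, hz1⟩ := hz x hx
  refine ⟨z x, hzb, hzpos, hz1, hρx.trans ?_⟩
  rw [hcard]
  gcongr
  linarith

theorem statement18
    {B : Type*} [NonUnitalCStarAlgebra B]
    (ρ : B →L[ℂ] ℂ) (hρ : IsState ρ)
    (b : B) (hbpos : ∃ c : B, b = star c * c) (hbnorm : ‖b‖ = 1)
    (hbspec : (quasispectrum ℂ b).Infinite)
    (n : ℕ) (hn : 1 ≤ n) :
    ∃ z ∈ closure ((NonUnitalStarAlgebra.adjoin ℂ {b} : NonUnitalStarSubalgebra ℂ B) : Set B),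
      (∃ c : B, z = star c * c) ∧ ‖z‖ = 1 ∧ (ρ (z * z)).re ≤ 1 / n :=
  statement18_general ρ hρ b hbpos hbspec n hn
end
end
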